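/- arXiv:2303.07409 — 8 statements merged into one kernel-verified Lean document; each statement's English description precedes it below -/
import Mathlib

section
/- Let H be a complex Hilbert space, B a bounded self-adjoint operator on H, and f : ℝ → ℝ a function with Lipschitz constant 1. Set A = f(B) (continuous functional calculus). Then Δ_x(A) ≤ Δ_x(B) for every unit vector x ∈ H. (Theorem 2.1, implication (iii) ⇒ (i).) -/
/-- The expectation value of a bounded observable `A` in the pure state `x`. -/
noncomputable def expVal {H : Type*} [NormedAddCommGroup H] [InnerProductSpace ℂ H]
    (A : H →L[ℂ] H) (x : H) : ℝ :=
  (inner ℂ (A x) x : ℂ).re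

/-- The variance of a bounded observable `A` in the pure state `x`. -/
noncomputable def variance {H : Type*} [NormedAddCommGroup H] [InnerProductSpace ℂ H]
    (A : H →L[ℂ] H) (x : H) : ℝ :=
  (inner ℂ (A (A x)) x : ℂ).re - ((inner ℂ (A x) x : ℂ).re) ^ 2

/-- For a self-adjoint `T`, `re ⟪T (T x), x⟫ = ‖T x‖ ^ 2`. -/
lemma re_inner_apply_apply {H : Type*} [NormedAddCommGroup H] [InnerProductSpace ℂ H]
    [CompleteSpace H] (T : H →L[ℂ] H) (hT : IsSelfAdjoint T) (x : H) :
    (inner ℂ (T (T x)) x : ℂ).re = ‖T x‖ ^ 2 := by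
  rw [show T (T x) = (ContinuousLinearMap.adjoint T) (T x) by rw [hT.adjoint_eq],
    ContinuousLinearMap.adjoint_inner_left]
  exact inner_self_eq_norm_sq (𝕜 := ℂ) (T x)

lemma norm_sub_smul_sq {H : Type*} [NormedAddCommGroup H] [InnerProductSpace ℂ H]
    (y x : H) (hx : ‖x‖ = 1) (d : ℝ) :
    ‖y - d • x‖ ^ 2 = ‖y‖ ^ 2 - 2 * d * (inner ℂ y x : ℂ).re + d ^ 2 := by
  have h0 : (d • x : H) = ((d : ℂ) • x) := by
    rw [← Complex.coe_smul]
  rw [h0, norm_sub_sq (𝕜 := ℂ), inner_smul_right]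
  simp [norm_smul, hx, Complex.mul_re]
  ring

/-- Theorem 2.1, (iii) ⇒ (i): if `A = f(B)` for a `1`-Lipschitz `f`, then the variance of
`A` is dominated by that of `B` in every pure state. -/
theorem lipschitz_cfc_variance_le {H : Type*} [NormedAddCommGroup H] [InnerProductSpace ℂ H]
    [CompleteSpace H] (B : H →L[ℂ] H) (hB : IsSelfAdjoint B)
    (f : ℝ → ℝ) (hf : LipschitzWith 1 f) :
    ∀ x : H, ‖x‖ = 1 → variance (cfc f B) x ≤ variance B x := by
  intro x hx
  have hfc : Continuous f := hf.continuous
  have hA : IsSelfAdjoint (cfc f B) := cfc_predicate f B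
  set c : ℝ := (inner ℂ (B x) x : ℂ).re with hc
  set a : ℝ := (inner ℂ (cfc f B x) x : ℂ).re with ha
  set g : ℝ → ℝ := fun t => f t - f c with hgdef
  set h : ℝ → ℝ := fun t => t - c with hhdef
  have hgc : ContinuousOn g (spectrum ℝ B) := (hfc.sub continuous_const).continuousOn
  have hhc : ContinuousOn h (spectrum ℝ B) := (continuous_id.sub continuous_const).continuousOn
  have hG : IsSelfAdjoint (cfc g B) := cfc_predicate g B
  have hH : IsSelfAdjoint (cfc h B) := cfc_predicate h B
  have hGdef : cfc g B = cfc f B - algebraMap ℝ (H →L[ℂ] H) (f c) := by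
    rw [hgdef, cfc_sub f (fun _ => f c) B hfc.continuousOn continuousOn_const, cfc_const _ B hB]
  have hHdef : cfc h B = B - algebraMap ℝ (H →L[ℂ] H) c := by
    rw [hhdef, cfc_sub (fun t => t) (fun _ => c) B continuousOn_id continuousOn_const,
      cfc_id' ℝ B hB, cfc_const _ B hB]
  have halg : ∀ (r : ℝ) (y : H), (algebraMap ℝ (H →L[ℂ] H) r) y = r • y := by
    intro r y; simp [Algebra.algebraMap_eq_smul_one]
  have hGx : cfc g B x = cfc f B x - (f c) • x := by
    rw [hGdef]; simp [ContinuousLinearMap.sub_apply, halg]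
  have hHx : cfc h B x = B x - c • x := by
    rw [hHdef]; simp [ContinuousLinearMap.sub_apply, halg]
  have hmulg : cfc (fun t => g t * g t) B = cfc g B * cfc g B := cfc_mul g g B hgc hgc
  have hmulh : cfc (fun t => h t * h t) B = cfc h B * cfc h B := cfc_mul h h B hhc hhc
  have hmono : cfc (fun t => g t * g t) B ≤ cfc (fun t => h t * h t) B := by
    refine cfc_mono (fun t _ => ?_) (hgc.mul hgc) (hhc.mul hhc)
    have h1 : |f t - f c| ≤ |t - c| := by
      have := hf.dist_le_mul t c
      simpa [Real.dist_eq] using this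
    calc g t * g t = |g t| * |g t| := (abs_mul_abs_self _).symm
      _ ≤ |h t| * |h t| := mul_self_le_mul_self (abs_nonneg _) h1
      _ = h t * h t := abs_mul_abs_self _
  have hpos := ((ContinuousLinearMap.le_def _ _).mp hmono).inner_nonneg_left x
  have key : (inner ℂ (cfc (fun t => g t * g t) B x) x : ℂ).re
      ≤ (inner ℂ (cfc (fun t => h t * h t) B x) x : ℂ).re := by
    simp only [ContinuousLinearMap.reApplyInnerSelf, ContinuousLinearMap.sub_apply,
      inner_sub_left, map_sub] at hpos
    have hpos' := (Complex.nonneg_iff.mp hpos).1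
    rw [Complex.sub_re] at hpos'
    exact sub_nonneg.mp hpos'
  have e1 : (inner ℂ (cfc (fun t => g t * g t) B x) x : ℂ).re = ‖cfc g B x‖ ^ 2 := by
    rw [hmulg, ContinuousLinearMap.mul_apply]
    exact re_inner_apply_apply (cfc g B) hG x
  have e2 : (inner ℂ (cfc (fun t => h t * h t) B x) x : ℂ).re = ‖cfc h B x‖ ^ 2 := by
    rw [hmulh, ContinuousLinearMap.mul_apply]
    exact re_inner_apply_apply (cfc h B) hH x
  have hvA : variance (cfc f B) x = ‖cfc f B x‖ ^ 2 - a ^ 2 := by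
    rw [variance, re_inner_apply_apply (cfc f B) hA, ha]
  have hvB : variance B x = ‖B x‖ ^ 2 - c ^ 2 := by
    rw [variance, re_inner_apply_apply B hB, hc]
  have step1 : variance (cfc f B) x ≤ ‖cfc f B x - (f c) • x‖ ^ 2 := by
    rw [hvA, norm_sub_smul_sq _ _ hx]
    nlinarith [sq_nonneg (f c - a)]
  have step2 : ‖cfc f B x - (f c) • x‖ ^ 2 ≤ ‖B x - c • x‖ ^ 2 := by
    rw [← hGx, ← hHx, ← e1, ← e2]; exact key
  have step3 : ‖B x - c • x‖ ^ 2 = variance B x := by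
    rw [hvB, norm_sub_smul_sq _ _ hx]; ring
  linarith
end

section
/- Let n ≥ 1, let B be an n×n complex Hermitian matrix, and let f : ℝ → ℝ be a function with Lipschitz constant 1. Set A = f(B). Then for every density matrix ρ (positive semidefinite n×n matrix with trace 1), Tr(ρA²) − (Tr(ρA))² ≤ Tr(ρB²) − (Tr(ρB))². (Theorem 2.1, implication (iii) ⇒ (ii), finite-dimensional case.) -/
open scoped ComplexOrder

private lemma scalar_var_le {ι : Type*} (s : Finset ι) (p x : ι → ℝ)
    (hp : ∀ i ∈ s, 0 ≤ p i) (hsum : ∑ i ∈ s, p i = 1)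
    (f : ℝ → ℝ) (hf : LipschitzWith 1 f) :
    (∑ i ∈ s, p i * (f (x i))^2) - (∑ i ∈ s, p i * f (x i))^2 ≤
      (∑ i ∈ s, p i * (x i)^2) - (∑ i ∈ s, p i * x i)^2 := by
  set t := ∑ i ∈ s, p i * x i with ht
  set c := f t with hc
  have expand : ∀ y : ι → ℝ, ∀ a : ℝ, ∑ i ∈ s, p i * (y i - a)^2
      = (∑ i ∈ s, p i * (y i)^2) - 2 * a * (∑ i ∈ s, p i * y i) + a^2 := by
    intro y a
    have : ∀ i ∈ s, p i * (y i - a)^2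
        = p i * (y i)^2 - 2 * a * (p i * y i) + a^2 * p i := by
      intro i _; ring
    rw [Finset.sum_congr rfl this, Finset.sum_add_distrib, Finset.sum_sub_distrib,
      ← Finset.mul_sum, ← Finset.mul_sum, hsum, mul_one]
  have h1 : (∑ i ∈ s, p i * (f (x i))^2) - (∑ i ∈ s, p i * f (x i))^2
      ≤ ∑ i ∈ s, p i * (f (x i) - c)^2 := by
    rw [expand (fun i => f (x i)) c]
    nlinarith [sq_nonneg ((∑ i ∈ s, p i * f (x i)) - c)]
  have h2 : ∑ i ∈ s, p i * (f (x i) - c)^2 ≤ ∑ i ∈ s, p i * (x i - t)^2 := by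
    apply Finset.sum_le_sum
    intro i hi
    have hd : |f (x i) - f t| ≤ |x i - t| := by
      have := hf.dist_le_mul (x i) t
      simpa [Real.dist_eq] using this
    have : (f (x i) - c)^2 ≤ (x i - t)^2 := by
      rw [hc, ← sq_abs, ← sq_abs (x i - t)]
      exact pow_le_pow_left₀ (abs_nonneg _) hd 2
    exact mul_le_mul_of_nonneg_left this (hp i hi)
  have h3 : ∑ i ∈ s, p i * (x i - t)^2 = (∑ i ∈ s, p i * (x i)^2) - t^2 := by
    rw [expand x t, ← ht]; ring
  linarith

private lemma trace_mul_conj {n : ℕ} (ρ U : Matrix (Fin n) (Fin n) ℂ) (d : Fin n → ℂ) :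
    (ρ * (U * Matrix.diagonal d * star U)).trace
      = ∑ i, (star U * ρ * U) i i * d i := by
  have : (ρ * (U * Matrix.diagonal d * star U)).trace
      = ((star U * ρ * U) * Matrix.diagonal d).trace := by
    rw [show ρ * (U * Matrix.diagonal d * star U)
        = (ρ * U * Matrix.diagonal d) * star U by noncomm_ring,
      Matrix.trace_mul_comm]
    noncomm_ring
  rw [this, Matrix.trace]
  congr 1
  ext i
  simp [Matrix.diag, Matrix.mul_diagonal]

/-- Theorem 2.1, (iii) ⇒ (ii), finite-dimensional case: if `A = f(B)` for a `1`-Lipschitz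
function `f` applied to a Hermitian matrix `B` via the functional calculus, then for every
density matrix `ρ` one has `Tr(ρA²) − (Tr(ρA))² ≤ Tr(ρB²) − (Tr(ρB))²`. -/
theorem lipschitz_cfc_matrix_variance_le (n : ℕ) (hn : 1 ≤ n)
    (B : Matrix (Fin n) (Fin n) ℂ) (hB : B.IsHermitian)
    (f : ℝ → ℝ) (hf : LipschitzWith 1 f) :
    ∀ ρ : Matrix (Fin n) (Fin n) ℂ, ρ.PosSemidef → ρ.trace = 1 →
      ((ρ * (hB.cfc f * hB.cfc f)).trace).re - (((ρ * hB.cfc f).trace).re) ^ 2 ≤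
        ((ρ * (B * B)).trace).re - (((ρ * B).trace).re) ^ 2 := by
  intro ρ hρ hρtr
  set U : Matrix (Fin n) (Fin n) ℂ := (hB.eigenvectorUnitary : Matrix (Fin n) (Fin n) ℂ) with hU
  have hUstar : star U * U = 1 := Matrix.mem_unitaryGroup_iff'.mp (hB.eigenvectorUnitary).2
  have hUstar' : U * star U = 1 := Matrix.mem_unitaryGroup_iff.mp (hB.eigenvectorUnitary).2
  set σ := star U * ρ * U with hσdef
  set ev := hB.eigenvalues with hev
  -- p and its properties
  set p : Fin n → ℝ := fun i => (σ i i).re with hp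
  have hσps : σ.PosSemidef := hρ.conjTranspose_mul_mul_same U
  have hdiag : ∀ i, (0:ℂ) ≤ σ i i := by
    intro i
    exact hσps.diag_nonneg
  have hpnn : ∀ i, 0 ≤ p i := fun i => (Complex.nonneg_iff.mp (hdiag i)).1
  have hσdiag_real : ∀ i, (σ i i : ℂ) = (p i : ℂ) := by
    intro i
    obtain ⟨hre, him⟩ := Complex.nonneg_iff.mp (hdiag i)
    apply Complex.ext <;> simp [hp, ← him]
  have hσtr : σ.trace = 1 := by
    rw [hσdef, Matrix.trace_mul_comm, ← mul_assoc, hUstar', one_mul, hρtr]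
  have hpsum : ∑ i, p i = 1 := by
    have h := congrArg Complex.re hσtr
    simpa [Matrix.trace, Matrix.diag, Complex.re_sum, p] using h
  -- generic trace computation
  have key : ∀ g : ℝ → ℝ,
      ((ρ * (U * Matrix.diagonal (Complex.ofReal ∘ g ∘ ev) * star U)).trace).re
        = ∑ i, p i * g (ev i) := by
    intro g
    rw [trace_mul_conj]
    rw [← hσdef]
    rw [Complex.re_sum]
    congr 1
    ext i
    rw [hσdiag_real i]
    simp [← Complex.ofReal_mul]
  -- products of the conjugated diagonal forms
  have prod_form : ∀ g : ℝ → ℝ,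
      (U * Matrix.diagonal (Complex.ofReal ∘ g ∘ ev) * star U) * (U * Matrix.diagonal (Complex.ofReal ∘ g ∘ ev) * star U)
        = U * Matrix.diagonal (Complex.ofReal ∘ (fun x => (g x)^2) ∘ ev) * star U := by
    intro g
    have : Matrix.diagonal (Complex.ofReal ∘ g ∘ ev) * Matrix.diagonal (Complex.ofReal ∘ g ∘ ev)
        = Matrix.diagonal (((↑) : ℝ → ℂ) ∘ (fun x => (g x)^2) ∘ ev) := by
      rw [Matrix.diagonal_mul_diagonal]
      ext i j
      by_cases h : i = j
      · subst h; simp [sq]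
      · simp [Matrix.diagonal_apply_ne _ h]
    calc (U * Matrix.diagonal (Complex.ofReal ∘ g ∘ ev) * star U) * (U * Matrix.diagonal (Complex.ofReal ∘ g ∘ ev) * star U)
        = U * (Matrix.diagonal (Complex.ofReal ∘ g ∘ ev) * (star U * U) * Matrix.diagonal (Complex.ofReal ∘ g ∘ ev)) * star U := by
          noncomm_ring
      _ = U * Matrix.diagonal (Complex.ofReal ∘ (fun x => (g x)^2) ∘ ev) * star U := by
          rw [hUstar, mul_one, this]
  have hAeq : hB.cfc f = U * Matrix.diagonal (Complex.ofReal ∘ f ∘ ev) * star U := rfl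
  have hBeq : B = U * Matrix.diagonal (Complex.ofReal ∘ id ∘ ev) * star U := by
    simpa using hB.spectral_theorem
  have e1 : ((ρ * (hB.cfc f * hB.cfc f)).trace).re = ∑ i, p i * (f (ev i))^2 := by
    rw [hAeq, prod_form f, key (fun x => (f x)^2)]
  have e2 : ((ρ * hB.cfc f).trace).re = ∑ i, p i * f (ev i) := by
    rw [hAeq, key f]
  have e3 : ((ρ * (B * B)).trace).re = ∑ i, p i * (ev i)^2 := by
    rw [hBeq, prod_form id, key (fun x => (id x)^2)]
    simp only [id]
  have e4 : ((ρ * B).trace).re = ∑ i, p i * ev i := by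
    rw [hBeq, key id]
    simp only [id]
  rw [e1, e2, e3, e4]
  exact scalar_var_le Finset.univ p ev (fun i _ => hpnn i) hpsum f hf
end

section
/- Let n ≥ 1 and let A, B be n×n complex Hermitian matrices. Then the following are equivalent: (i) for every unit vector x ∈ ℂⁿ, ⟪A²x,x⟫ − ⟪Ax,x⟫² ≤ ⟪B²x,x⟫ − ⟪Bx,x⟫²; (ii) for every density matrix ρ (positive semidefinite with trace 1), Tr(ρA²) − (Tr(ρA))² ≤ Tr(ρB²) − (Tr(ρB))². (Theorem 2.1, equivalence (i) ⇔ (ii), finite-dimensional case.) -/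
open scoped ComplexOrder Matrix

namespace MatVarAux

open Matrix Finset Complex

variable {n : ℕ}

noncomputable def op (x : Fin n → ℂ) : Matrix (Fin n) (Fin n) ℂ := vecMulVec x (star x)

noncomputable def qf (C : Matrix (Fin n) (Fin n) ℂ) (x : Fin n → ℂ) : ℝ :=
  (star x ⬝ᵥ (C *ᵥ x)).re

lemma op_mul_trace (x : Fin n → ℂ) (M : Matrix (Fin n) (Fin n) ℂ) :
    (op x * M).trace = star x ⬝ᵥ (M *ᵥ x) := by
  simp only [op, trace, diag_apply, mul_apply, vecMulVec_apply, dotProduct, mulVec,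
    Pi.star_apply, Finset.mul_sum]
  rw [Finset.sum_comm]
  apply Finset.sum_congr rfl
  intro j _
  apply Finset.sum_congr rfl
  intro i _
  ring

lemma op_posSemidef (x : Fin n → ℂ) : (op x).PosSemidef := by
  exact posSemidef_vecMulVec_self_star x

lemma op_trace (x : Fin n → ℂ) : (op x).trace = star x ⬝ᵥ x := by
  simp only [op, trace, diag_apply, vecMulVec_apply, dotProduct, Pi.star_apply]
  exact Finset.sum_congr rfl fun i _ => mul_comm _ _

lemma dot_self_eq (w : Fin n → ℂ) :
    star w ⬝ᵥ w = ((∑ j, Complex.normSq (w j) : ℝ) : ℂ) := by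
  push_cast
  simp only [dotProduct, Pi.star_apply]
  apply Finset.sum_congr rfl
  intro j _
  rw [mul_comm, Complex.star_def, Complex.mul_conj]

lemma dot_self_re_nonneg (w : Fin n → ℂ) : 0 ≤ (star w ⬝ᵥ w).re := by
  rw [dot_self_eq, Complex.ofReal_re]
  exact Finset.sum_nonneg fun j _ => Complex.normSq_nonneg _

lemma dot_self_ofReal (w : Fin n → ℂ) :
    star w ⬝ᵥ w = (((star w ⬝ᵥ w).re : ℝ) : ℂ) := by
  rw [dot_self_eq, Complex.ofReal_re]

lemma eq_zero_of_dot_self_re (w : Fin n → ℂ) (h : (star w ⬝ᵥ w).re = 0) : w = 0 := by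
  rw [dot_self_eq, Complex.ofReal_re] at h
  funext j
  have hj : Complex.normSq (w j) = 0 :=
    (Finset.sum_eq_zero_iff_of_nonneg
      (fun i (_ : i ∈ Finset.univ) => Complex.normSq_nonneg (w i))).mp h j (Finset.mem_univ j)
  simpa using Complex.normSq_eq_zero.mp hj

lemma quad_expand (C : Matrix (Fin n) (Fin n) ℂ) (a b : ℂ) (v u : Fin n → ℂ) :
    star (a • v + b • u) ⬝ᵥ (C *ᵥ (a • v + b • u)) =
      (starRingEnd ℂ) a * a * (star v ⬝ᵥ (C *ᵥ v)) + (starRingEnd ℂ) a * b * (star v ⬝ᵥ (C *ᵥ u))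
      + (starRingEnd ℂ) b * a * (star u ⬝ᵥ (C *ᵥ v))
      + (starRingEnd ℂ) b * b * (star u ⬝ᵥ (C *ᵥ u)) := by
  simp only [mulVec_add, mulVec_smul, star_add, star_smul, add_dotProduct, dotProduct_add,
    smul_dotProduct, dotProduct_smul, smul_eq_mul, star_trivial, RCLike.star_def]
  ring

lemma rotate (C : Matrix (Fin n) (Fin n) ℂ) (v u : Fin n → ℂ)
    (hv : 0 < qf C v) (hu : qf C u < 0) :
    ∃ w w' : Fin n → ℂ, op w + op w' = op v + op u ∧ qf C w = 0 := by
  set cv := qf C v with hcv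
  set cu := qf C u with hcu
  have hd : 0 < cv - cu := by linarith
  set s : ℝ := Real.sqrt (-cu / (cv - cu)) with hs
  set t : ℝ := Real.sqrt (cv / (cv - cu)) with ht
  have hs2 : s ^ 2 = -cu / (cv - cu) := Real.sq_sqrt (div_nonneg (by linarith) hd.le)
  have ht2 : t ^ 2 = cv / (cv - cu) := Real.sq_sqrt (div_nonneg (by linarith) hd.le)
  have hst : s ^ 2 + t ^ 2 = 1 := by rw [hs2, ht2]; field_simp; ring
  have hzero : s ^ 2 * cv + t ^ 2 * cu = 0 := by rw [hs2, ht2]; field_simp; ring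
  set z : ℂ := star v ⬝ᵥ (C *ᵥ u) with hz
  set z' : ℂ := star u ⬝ᵥ (C *ᵥ v) with hz'
  set ζ : ℂ := z + (starRingEnd ℂ) z' with hζ
  set ω : ℂ := if ζ = 0 then 1 else Complex.I * (starRingEnd ℂ) ζ / (‖ζ‖ : ℂ) with hωdef
  have habs : ‖ω‖ = 1 := by
    rw [hωdef]; split_ifs with h
    · simp
    · rw [norm_div, norm_mul, Complex.norm_I, Complex.norm_conj, one_mul, Complex.norm_real,
        norm_norm, div_self (norm_ne_zero_iff.mpr h)]
  have hnormω : ω.re ^ 2 + ω.im ^ 2 = 1 := by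
    have := Complex.normSq_eq_norm_sq ω
    rw [habs] at this
    simpa [Complex.normSq_apply, sq] using this
  have hωζ : (ω * ζ).re = 0 := by
    rw [hωdef]; split_ifs with h
    · simp [h]
    · have h1 : Complex.I * (starRingEnd ℂ) ζ / (‖ζ‖ : ℂ) * ζ
          = ((Complex.normSq ζ / ‖ζ‖ : ℝ)) * Complex.I := by
        have hne : (‖ζ‖ : ℂ) ≠ 0 := by
          simpa using h
        field_simp
        rw [mul_comm ((starRingEnd ℂ) ζ) ζ, Complex.mul_conj, Complex.ofReal_div, mul_div_assoc',
          mul_div_cancel_left₀ _ hne]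
      rw [h1]
      simp
  set w : Fin n → ℂ := (s : ℂ) • v + ((t : ℂ) * ω) • u with hw
  set w' : Fin n → ℂ := (-(t : ℂ) * (starRingEnd ℂ) ω) • v + (s : ℂ) • u with hw'
  have hω : ω * (starRingEnd ℂ) ω = 1 := by
    rw [Complex.mul_conj, Complex.normSq_eq_norm_sq, habs]
    norm_num
  refine ⟨w, w', ?_, ?_⟩
  · have hstC : (s : ℂ) ^ 2 + (t : ℂ) ^ 2 = 1 := by exact_mod_cast hst
    ext j k
    simp only [op, Matrix.add_apply, vecMulVec_apply, hw, hw', Pi.add_apply, Pi.smul_apply,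
      smul_eq_mul, Pi.star_apply, Complex.star_def, _root_.map_add, _root_.map_mul,
      _root_.map_neg, Complex.conj_ofReal, Complex.conj_conj]
    linear_combination (v j * (starRingEnd ℂ) (v k) + u j * (starRingEnd ℂ) (u k)) * hstC
      + (t:ℂ)^2 * (v j * (starRingEnd ℂ) (v k) + u j * (starRingEnd ℂ) (u k)) * hω
  · show (star w ⬝ᵥ (C *ᵥ w)).re = 0
    rw [hw, quad_expand]
    rw [hζ] at hωζ
    have hcv' : (star v ⬝ᵥ (C *ᵥ v)).re = cv := rfl
    have hcu' : (star u ⬝ᵥ (C *ᵥ u)).re = cu := rfl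
    simp only [_root_.map_mul, Complex.conj_ofReal, Complex.add_re, Complex.add_im,
      Complex.mul_re, Complex.mul_im, Complex.ofReal_re, Complex.ofReal_im,
      Complex.conj_re, Complex.conj_im] at hωζ ⊢
    rw [hcv', hcu']
    linear_combination hzero + t^2*cu*hnormω + s*t*hωζ

lemma qf_eq_trace (C : Matrix (Fin n) (Fin n) ℂ) (x : Fin n → ℂ) :
    qf C x = ((op x * C).trace).re := by rw [op_mul_trace]; rfl

lemma sum_update_two {β : Type*} {M : Type*} [AddCommGroup M] {k : ℕ} (f : Fin k → β)
    (F : β → M) {i j : Fin k} (hij : i ≠ j) (w w' : β) :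
    ∑ x, F (Function.update (Function.update f i w) j w' x)
      = ((∑ x, F (f x)) - F (f i) - F (f j)) + F w + F w' := by
  classical
  have h1 : (fun x => F (Function.update (Function.update f i w) j w' x))
      = Function.update (Function.update (fun x => F (f x)) i (F w)) j (F w') := by
    funext x
    rcases eq_or_ne x j with rfl | hxj
    · simp
    rcases eq_or_ne x i with rfl | hxi
    · simp [Function.update_of_ne hxj]
    · simp [Function.update_of_ne hxj, Function.update_of_ne hxi]
  have h2 : ∑ x, F (Function.update (Function.update f i w) j w' x)
      = ∑ x, Function.update (Function.update (fun x => F (f x)) i (F w)) j (F w') x := by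
    rw [h1]
  rw [h2, Finset.sum_update_of_mem (Finset.mem_univ j)]
  have hi' : i ∈ Finset.univ \ {j} := by simp [hij]
  rw [Finset.sum_update_of_mem hi']
  have h3 : ((Finset.univ \ {j}) \ {i} : Finset (Fin k)) = (Finset.univ.erase j).erase i := by
    rw [Finset.sdiff_singleton_eq_erase, Finset.sdiff_singleton_eq_erase]
  rw [h3]
  have h4 : ∑ x ∈ (Finset.univ.erase j).erase i, F (f x)
      = (∑ x ∈ Finset.univ.erase j, F (f x)) - F (f i) := by
    have : i ∈ Finset.univ.erase j := by simp [hij]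
    rw [← Finset.add_sum_erase _ _ this]
    abel
  have h5 : ∑ x ∈ Finset.univ.erase j, F (f x) = (∑ x, F (f x)) - F (f j) := by
    rw [← Finset.add_sum_erase _ _ (Finset.mem_univ j)]
    abel
  rw [h4, h5]
  abel

lemma equalize (C : Matrix (Fin n) (Fin n) ℂ) {k : ℕ} (N : ℕ) (f : Fin k → (Fin n → ℂ))
    (hcard : (Finset.univ.filter (fun i => qf C (f i) ≠ 0)).card ≤ N)
    (hsum : (∑ i, qf C (f i)) = 0) :
    ∃ g : Fin k → (Fin n → ℂ),
      (∑ i, op (g i)) = (∑ i, op (f i)) ∧ ∀ i, qf C (g i) = 0 := by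
  induction N generalizing f with
  | zero =>
    refine ⟨f, rfl, fun i => ?_⟩
    by_contra hne
    have hmem : i ∈ Finset.univ.filter (fun i => qf C (f i) ≠ 0) := by
      simp [hne]
    have := Finset.card_pos.mpr ⟨i, hmem⟩
    omega
  | succ N ih =>
    by_cases hall : ∀ i, qf C (f i) = 0
    · exact ⟨f, rfl, hall⟩
    push_neg at hall
    obtain ⟨i₀, hi₀⟩ := hall
    have hpos : ∃ i, 0 < qf C (f i) := by
      by_contra hnp
      push_neg at hnp
      have h0 : ∀ i ∈ Finset.univ, qf C (f i) = 0 :=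
        (Finset.sum_eq_zero_iff_of_nonpos (fun i _ => hnp i)).mp hsum
      exact hi₀ (h0 i₀ (Finset.mem_univ _))
    have hneg : ∃ j, qf C (f j) < 0 := by
      by_contra hnn
      push_neg at hnn
      have h0 : ∀ i ∈ Finset.univ, qf C (f i) = 0 :=
        (Finset.sum_eq_zero_iff_of_nonneg (fun i _ => hnn i)).mp hsum
      exact hi₀ (h0 i₀ (Finset.mem_univ _))
    obtain ⟨i, hi⟩ := hpos
    obtain ⟨j, hj⟩ := hneg
    have hij : i ≠ j := by
      intro h; rw [h] at hi; linarith
    obtain ⟨w, w', hop, hqw⟩ := rotate C (f i) (f j) hi hj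
    have hsum_q : qf C w + qf C w' = qf C (f i) + qf C (f j) := by
      have h1 : ((op w * C).trace + (op w' * C).trace).re
          = ((op (f i) * C).trace + (op (f j) * C).trace).re := by
        rw [← Matrix.trace_add, ← Matrix.trace_add, ← Matrix.add_mul, ← Matrix.add_mul, hop]
      simp only [Complex.add_re] at h1
      rw [← qf_eq_trace, ← qf_eq_trace, ← qf_eq_trace, ← qf_eq_trace] at h1
      exact h1
    have hqw' : qf C w' = qf C (f i) + qf C (f j) := by
      rw [hqw] at hsum_q; linarith
    set g₀ : Fin k → (Fin n → ℂ) := Function.update (Function.update f i w) j w' with hg₀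
    have hg₀i : g₀ i = w := by
      rw [hg₀, Function.update_of_ne hij, Function.update_self]
    have hg₀x : ∀ x, x ≠ i → x ≠ j → g₀ x = f x := by
      intro x h1 h2
      rw [hg₀, Function.update_of_ne h2, Function.update_of_ne h1]
    have hsum_op : ∑ x, op (g₀ x) = ∑ x, op (f x) := by
      rw [hg₀, sum_update_two f op hij w w']
      rw [add_assoc, hop]
      abel
    have hsum_qf : ∑ x, qf C (g₀ x) = 0 := by
      rw [hg₀, sum_update_two f (qf C) hij w w', hqw, hqw', hsum]
      ring
    have hmem_i : i ∈ Finset.univ.filter (fun x => qf C (f x) ≠ 0) := by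
      simp [hi.ne']
    have hsubset : Finset.univ.filter (fun x => qf C (g₀ x) ≠ 0)
        ⊆ (Finset.univ.filter (fun x => qf C (f x) ≠ 0)).erase i := by
      intro x hx
      simp only [Finset.mem_filter, Finset.mem_univ, true_and] at hx
      rcases eq_or_ne x i with rfl | hxi
      · rw [hg₀i, hqw] at hx; exact absurd rfl hx
      rcases eq_or_ne x j with rfl | hxj
      · rw [Finset.mem_erase]
        refine ⟨hxi, ?_⟩
        simp [hj.ne]
      · rw [Finset.mem_erase]
        refine ⟨hxi, ?_⟩
        rw [hg₀x x hxi hxj] at hx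
        simp [hx]
    have hcard' : (Finset.univ.filter (fun x => qf C (g₀ x) ≠ 0)).card ≤ N := by
      have h1 := Finset.card_le_card hsubset
      rw [Finset.card_erase_of_mem hmem_i] at h1
      omega
    obtain ⟨g, hg1, hg2⟩ := ih g₀ hcard' hsum_qf
    exact ⟨g, by rw [hg1, hsum_op], hg2⟩

lemma smul_dot_self (c : ℂ) (w : Fin n → ℂ) :
    star (c • w) ⬝ᵥ (c • w) = (starRingEnd ℂ) c * c * (star w ⬝ᵥ w) := by
  simp only [star_smul, smul_dotProduct, dotProduct_smul, smul_eq_mul, RCLike.star_def]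
  ring

lemma smul_dot_mulVec (c : ℂ) (w : Fin n → ℂ) (M : Matrix (Fin n) (Fin n) ℂ) :
    star (c • w) ⬝ᵥ (M *ᵥ (c • w)) = (starRingEnd ℂ) c * c * (star w ⬝ᵥ (M *ᵥ w)) := by
  simp only [mulVec_smul, star_smul, smul_dotProduct, dotProduct_smul, smul_eq_mul,
    RCLike.star_def]
  ring

lemma key_ineq (A B : Matrix (Fin n) (Fin n) ℂ)
    (hpure : ∀ x : Fin n → ℂ, star x ⬝ᵥ x = 1 →
        (star x ⬝ᵥ (A *ᵥ (A *ᵥ x))).re - ((star x ⬝ᵥ (A *ᵥ x)).re) ^ 2 ≤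
          (star x ⬝ᵥ (B *ᵥ (B *ᵥ x))).re - ((star x ⬝ᵥ (B *ᵥ x)).re) ^ 2)
    (w : Fin n → ℂ) (mA : ℝ)
    (heq : (star w ⬝ᵥ (A *ᵥ w)).re = mA * (star w ⬝ᵥ w).re) :
    (star w ⬝ᵥ ((A * A) *ᵥ w)).re - mA ^ 2 * (star w ⬝ᵥ w).re ≤
      (star w ⬝ᵥ ((B * B) *ᵥ w)).re - ((star w ⬝ᵥ (B *ᵥ w)).re) ^ 2 / (star w ⬝ᵥ w).re := by
  rcases eq_or_lt_of_le (dot_self_re_nonneg w) with h0 | hpos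
  · have hw : w = 0 := eq_zero_of_dot_self_re w h0.symm
    subst hw
    simp
  · set μ : ℝ := (star w ⬝ᵥ w).re with hμ
    have hμne : μ ≠ 0 := hpos.ne'
    set c : ℂ := ((Real.sqrt μ : ℝ) : ℂ)⁻¹ with hc
    have hsq : Real.sqrt μ * Real.sqrt μ = μ := Real.mul_self_sqrt hpos.le
    have hcc : (starRingEnd ℂ) c * c = ((μ⁻¹ : ℝ) : ℂ) := by
      rw [hc, map_inv₀, Complex.conj_ofReal, ← mul_inv, ← Complex.ofReal_mul, hsq,
        Complex.ofReal_inv]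
    set x : Fin n → ℂ := c • w with hx
    have hunit : star x ⬝ᵥ x = 1 := by
      rw [hx, smul_dot_self, hcc, dot_self_ofReal w, ← hμ, ← Complex.ofReal_mul,
        inv_mul_cancel₀ hμne, Complex.ofReal_one]
    have hdot : ∀ M : Matrix (Fin n) (Fin n) ℂ,
        (star x ⬝ᵥ (M *ᵥ x)).re = μ⁻¹ * (star w ⬝ᵥ (M *ᵥ w)).re := by
      intro M
      rw [hx, smul_dot_mulVec, hcc, Complex.re_ofReal_mul]
    have h := hpure x hunit
    rw [Matrix.mulVec_mulVec, Matrix.mulVec_mulVec, hdot, hdot, hdot, hdot] at h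
    set aa := (star w ⬝ᵥ ((A * A) *ᵥ w)).re with haa
    set bb := (star w ⬝ᵥ ((B * B) *ᵥ w)).re with hbb
    set a := (star w ⬝ᵥ (A *ᵥ w)).re with ha
    set b := (star w ⬝ᵥ (B *ᵥ w)).re with hb
    have e : ∀ X Y : ℝ, μ ^ 2 * (μ⁻¹ * X - (μ⁻¹ * Y) ^ 2) = μ * X - Y ^ 2 := by
      intro X Y
      field_simp
    have h2 := mul_le_mul_of_nonneg_left h (sq_nonneg μ)
    rw [e, e] at h2
    have ha2 : a ^ 2 = mA ^ 2 * μ ^ 2 := by rw [heq]; ring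
    have hb2 : b ^ 2 / μ ≤ bb - aa + mA ^ 2 * μ := by
      rw [div_le_iff₀ hpos]
      nlinarith [h2, ha2]
    linarith

end MatVarAux

open MatVarAux Matrix
open scoped MatrixOrder

/-- Theorem 2.1, (i) ⇔ (ii), finite-dimensional case: for Hermitian matrices `A, B`,
the variance of `A` is dominated by that of `B` in all pure states if and only if it is
dominated in all (mixed) states, i.e. density matrices. -/
theorem matrix_variance_pure_iff_mixed (n : ℕ) (hn : 1 ≤ n)
    (A B : Matrix (Fin n) (Fin n) ℂ) (hA : A.IsHermitian) (hB : B.IsHermitian) :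
    (∀ x : Fin n → ℂ, star x ⬝ᵥ x = 1 →
        (star x ⬝ᵥ (A *ᵥ (A *ᵥ x))).re - ((star x ⬝ᵥ (A *ᵥ x)).re) ^ 2 ≤
          (star x ⬝ᵥ (B *ᵥ (B *ᵥ x))).re - ((star x ⬝ᵥ (B *ᵥ x)).re) ^ 2) ↔
      (∀ ρ : Matrix (Fin n) (Fin n) ℂ, ρ.PosSemidef → ρ.trace = 1 →
        ((ρ * (A * A)).trace).re - (((ρ * A).trace).re) ^ 2 ≤
          ((ρ * (B * B)).trace).re - (((ρ * B).trace).re) ^ 2) := by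
  constructor
  · intro hpure ρ hρ htr
    set S := CFC.sqrt ρ with hSdef
    have hS : S * S = ρ := CFC.sqrt_mul_sqrt_self ρ hρ.nonneg
    have hSh : S.IsHermitian := (CFC.sqrt_nonneg ρ).posSemidef.1
    set f : Fin n → (Fin n → ℂ) := fun i => fun j => S j i with hf
    have hstar : ∀ i k : Fin n, star (S k i) = S i k := by
      intro i k
      conv_rhs => rw [← hSh]
      exact (Matrix.conjTranspose_apply S k i).symm
    have hdecomp : ∑ i, op (f i) = ρ := by
      ext j k
      rw [Matrix.sum_apply, ← hS, Matrix.mul_apply]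
      refine Finset.sum_congr rfl fun i _ => ?_
      simp only [op, vecMulVec_apply, Pi.star_apply, hf]
      rw [hstar]
    have htrace : ∀ (g : Fin n → (Fin n → ℂ)), (∑ i, op (g i)) = ρ →
        ∀ M : Matrix (Fin n) (Fin n) ℂ,
          ∑ i, (star (g i) ⬝ᵥ (M *ᵥ (g i))) = (ρ * M).trace := by
      intro g hg M
      calc ∑ i, (star (g i) ⬝ᵥ (M *ᵥ (g i))) = ∑ i, (op (g i) * M).trace :=
            Finset.sum_congr rfl fun i _ => (op_mul_trace _ _).symm
        _ = ((∑ i, op (g i)) * M).trace := by rw [Finset.sum_mul, Matrix.trace_sum]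
        _ = (ρ * M).trace := by rw [hg]
    set mA : ℝ := ((ρ * A).trace).re with hmA
    set C : Matrix (Fin n) (Fin n) ℂ := A - (mA : ℂ) • (1 : Matrix (Fin n) (Fin n) ℂ) with hC
    have hqfC : ∀ x : Fin n → ℂ,
        qf C x = (star x ⬝ᵥ (A *ᵥ x)).re - mA * (star x ⬝ᵥ x).re := by
      intro x
      show (star x ⬝ᵥ (C *ᵥ x)).re = _
      rw [hC, Matrix.sub_mulVec, dotProduct_sub, Matrix.smul_mulVec, Matrix.one_mulVec,
        Complex.sub_re, dotProduct_smul, smul_eq_mul, Complex.re_ofReal_mul]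
    have hdotsum : ∀ (g : Fin n → (Fin n → ℂ)), (∑ i, op (g i)) = ρ →
        ∀ M : Matrix (Fin n) (Fin n) ℂ,
          ∑ i, (star (g i) ⬝ᵥ (M *ᵥ (g i))).re = ((ρ * M).trace).re := by
      intro g hg M
      rw [← Complex.re_sum, htrace g hg M]
    have hνsum : ∀ (g : Fin n → (Fin n → ℂ)), (∑ i, op (g i)) = ρ →
        ∑ i, (star (g i) ⬝ᵥ (g i)).re = 1 := by
      intro g hg
      have h1 : ∀ i : Fin n, star (g i) ⬝ᵥ (g i) = star (g i) ⬝ᵥ ((1 : Matrix (Fin n) (Fin n) ℂ) *ᵥ (g i)) := by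
        intro i; rw [Matrix.one_mulVec]
      calc ∑ i, (star (g i) ⬝ᵥ (g i)).re
          = ∑ i, (star (g i) ⬝ᵥ ((1 : Matrix (Fin n) (Fin n) ℂ) *ᵥ (g i))).re := by
            refine Finset.sum_congr rfl fun i _ => ?_
            rw [← h1]
        _ = ((ρ * 1).trace).re := hdotsum g hg 1
        _ = 1 := by rw [mul_one, htr]; rfl
    have hsum0 : ∑ i, qf C (f i) = 0 := by
      have h1 : ∑ i, qf C (f i)
          = (∑ i, (star (f i) ⬝ᵥ (A *ᵥ (f i))).re) - mA * ∑ i, (star (f i) ⬝ᵥ (f i)).re := by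
        rw [Finset.mul_sum, ← Finset.sum_sub_distrib]
        exact Finset.sum_congr rfl fun i _ => by rw [hqfC]
      rw [h1, hdotsum f hdecomp A, hνsum f hdecomp, ← hmA]
      ring
    have hcard : (Finset.univ.filter (fun i => qf C (f i) ≠ 0)).card ≤ n := by
      calc (Finset.univ.filter (fun i => qf C (f i) ≠ 0)).card
          ≤ (Finset.univ : Finset (Fin n)).card := Finset.card_filter_le _ _
        _ = n := by simp
    obtain ⟨g, hg_op, hg_qf⟩ := equalize C n f hcard hsum0
    have hgρ : ∑ i, op (g i) = ρ := hg_op.trans hdecomp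
    have heqi : ∀ i, (star (g i) ⬝ᵥ (A *ᵥ (g i))).re = mA * (star (g i) ⬝ᵥ (g i)).re := by
      intro i
      have h := hg_qf i
      rw [hqfC] at h
      linarith
    have hkey : ∀ i, (star (g i) ⬝ᵥ ((A * A) *ᵥ (g i))).re - mA ^ 2 * (star (g i) ⬝ᵥ (g i)).re ≤
        (star (g i) ⬝ᵥ ((B * B) *ᵥ (g i))).re
          - ((star (g i) ⬝ᵥ (B *ᵥ (g i))).re) ^ 2 / (star (g i) ⬝ᵥ (g i)).re :=
      fun i => key_ineq A B hpure (g i) mA (heqi i)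
    have hsum_le := Finset.sum_le_sum (fun i (_ : i ∈ Finset.univ) => hkey i)
    have hL : ∑ i, ((star (g i) ⬝ᵥ ((A * A) *ᵥ (g i))).re - mA ^ 2 * (star (g i) ⬝ᵥ (g i)).re)
        = ((ρ * (A * A)).trace).re - mA ^ 2 := by
      rw [Finset.sum_sub_distrib, ← Finset.mul_sum, hdotsum g hgρ (A * A), hνsum g hgρ]
      ring
    have hR : ∑ i, ((star (g i) ⬝ᵥ ((B * B) *ᵥ (g i))).re
          - ((star (g i) ⬝ᵥ (B *ᵥ (g i))).re) ^ 2 / (star (g i) ⬝ᵥ (g i)).re)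
        = ((ρ * (B * B)).trace).re
          - ∑ i, ((star (g i) ⬝ᵥ (B *ᵥ (g i))).re) ^ 2 / (star (g i) ⬝ᵥ (g i)).re := by
      rw [Finset.sum_sub_distrib, hdotsum g hgρ (B * B)]
    rw [hL, hR] at hsum_le
    have hCS : (((ρ * B).trace).re) ^ 2
        ≤ ∑ i, ((star (g i) ⬝ᵥ (B *ᵥ (g i))).re) ^ 2 / (star (g i) ⬝ᵥ (g i)).re := by
      have hcs := Finset.sum_sq_le_sum_mul_sum_of_sq_eq_mul Finset.univ
        (r := fun i => (star (g i) ⬝ᵥ (B *ᵥ (g i))).re)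
        (f := fun i => ((star (g i) ⬝ᵥ (B *ᵥ (g i))).re) ^ 2 / (star (g i) ⬝ᵥ (g i)).re)
        (g := fun i => (star (g i) ⬝ᵥ (g i)).re)
        (fun i _ => div_nonneg (sq_nonneg _) (dot_self_re_nonneg _))
        (fun i _ => dot_self_re_nonneg _)
        (fun i _ => by
          rcases eq_or_lt_of_le (dot_self_re_nonneg (g i)) with h0 | hgt
          · have hgi : g i = 0 := eq_zero_of_dot_self_re _ h0.symm
            simp [hgi]
          · rw [div_mul_cancel₀ _ hgt.ne'])
      rw [hνsum g hgρ, mul_one] at hcs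
      rw [← hdotsum g hgρ B]
      exact hcs
    calc ((ρ * (A * A)).trace).re - mA ^ 2
        ≤ ((ρ * (B * B)).trace).re
          - ∑ i, ((star (g i) ⬝ᵥ (B *ᵥ (g i))).re) ^ 2 / (star (g i) ⬝ᵥ (g i)).re := hsum_le
      _ ≤ ((ρ * (B * B)).trace).re - (((ρ * B).trace).re) ^ 2 := by linarith
  · intro hmix x hx
    have h := hmix (op x) (op_posSemidef x) (by rw [op_trace, hx])
    simp only [op_mul_trace, ← Matrix.mulVec_mulVec] at h
    exact h
end

section
/- Let H be a complex Hilbert space and A, B bounded self-adjoint operators on H. Then A ⪯ B and B ⪯ A hold simultaneously if and only if there exists c ∈ ℝ such that B = A + c·I or B = −A + c·I, where I is the identity operator. (Corollary 2.2: the variance-equivalence class of A is {A + cI, −A + cI : c ∈ ℝ}.) -/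
/-- The variance order: `A ⪯ B` iff the variance of `A` is at most that of `B` in every
pure state. -/
def VarLE {H : Type*} [NormedAddCommGroup H] [InnerProductSpace ℂ H]
    (A B : H →L[ℂ] H) : Prop :=
  ∀ x : H, ‖x‖ = 1 → variance A x ≤ variance B x

namespace VarOrder

variable {H : Type*} [NormedAddCommGroup H] [InnerProductSpace ℂ H]

local notation "⟪" x ", " y "⟫" => @inner ℂ _ _ x y

noncomputable def qf (T : H →L[ℂ] H) (x : H) : ℝ := (⟪T x, x⟫).re

lemma qf_one (x : H) : qf (1 : H →L[ℂ] H) x = ‖x‖ ^ 2 := by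
  have := inner_self_eq_norm_sq (𝕜 := ℂ) x
  simpa [qf, RCLike.re_to_complex] using this

lemma qf_add_op (S T : H →L[ℂ] H) (x : H) : qf (S + T) x = qf S x + qf T x := by
  simp [qf, inner_add_left]

lemma qf_sub_op (S T : H →L[ℂ] H) (x : H) : qf (S - T) x = qf S x - qf T x := by
  simp [qf, inner_sub_left]

lemma qf_smul_op (c : ℝ) (T : H →L[ℂ] H) (x : H) :
    qf ((c : ℂ) • T) x = c * qf T x := by
  simp only [qf, ContinuousLinearMap.smul_apply, inner_smul_left, Complex.conj_ofReal,
    Complex.mul_re, Complex.ofReal_re, Complex.ofReal_im]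
  ring

lemma qf_smul (T : H →L[ℂ] H) (s : ℂ) (x : H) :
    qf T (s • x) = Complex.normSq s * qf T x := by
  simp only [qf, map_smul, inner_smul_left, inner_smul_right, ← mul_assoc]
  rw [Complex.mul_conj]
  simp [Complex.mul_re, Complex.ofReal_re, Complex.ofReal_im]

lemma sym {T : H →L[ℂ] H} [CompleteSpace H] (hT : IsSelfAdjoint T) (x y : H) :
    (⟪T x, y⟫).re = (⟪T y, x⟫).re := by
  have h := hT.isSymmetric x y
  simp only [ContinuousLinearMap.coe_coe] at h
  rw [h, ← inner_conj_symm, Complex.conj_re]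

lemma qf_expand [CompleteSpace H] {T : H →L[ℂ] H} (hT : IsSelfAdjoint T) (x y : H) (t : ℝ) :
    qf T (x + (t : ℂ) • y) = qf T x + 2 * t * (⟪T x, y⟫).re + t ^ 2 * qf T y := by
  have hsym := sym hT x y
  simp only [qf, map_add, map_smul, inner_add_left, inner_add_right, inner_smul_left,
    inner_smul_right, Complex.conj_ofReal, Complex.add_re, Complex.mul_re,
    Complex.ofReal_re, Complex.ofReal_im]
  linear_combination (-t) * hsym

lemma norm_expand [CompleteSpace H] (x y : H) (t : ℝ) :
    ‖x + (t : ℂ) • y‖ ^ 2 = ‖x‖ ^ 2 + 2 * t * (⟪x, y⟫).re + t ^ 2 * ‖y‖ ^ 2 := by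
  have h1 := qf_expand (H := H) ((IsSelfAdjoint.one (H →L[ℂ] H))) x y t
  simpa [qf_one, ContinuousLinearMap.one_apply] using h1

lemma coeff_extract {p1 p2 p3 p4 : ℝ}
    (h : ∀ t : ℝ, p1 * t + p2 * t ^ 2 + p3 * t ^ 3 + p4 * t ^ 4 = 0) :
    p1 = 0 ∧ p2 = 0 := by
  have h1 := h 1; have h2 := h (-1); have h3 := h 2; have h4 := h (-2)
  norm_num at h1 h2 h3 h4
  constructor <;> linarith

end VarOrder

namespace VarOrder

variable {H : Type*} [NormedAddCommGroup H] [InnerProductSpace ℂ H]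

local notation "⟪" x ", " y "⟫" => @inner ℂ _ _ x y

lemma key [CompleteSpace H] (C D E : H →L[ℂ] H) (hC : IsSelfAdjoint C)
    (hD : IsSelfAdjoint D) (hE : IsSelfAdjoint E) (x₀ : H) (hx : ‖x₀‖ = 1)
    (hfC : qf C x₀ = 0) (hfD : qf D x₀ = 0)
    (hQI : ∀ x : H, qf E x * ‖x‖ ^ 2 = qf C x * qf D x) :
    C x₀ = 0 ∨ D x₀ = 0 := by
  have hE0 : qf E x₀ = 0 := by
    have := hQI x₀; rw [hx, hfC, hfD] at this; simpa using this
  -- coefficient extraction for every y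
  have main : ∀ y : H, 2 * (⟪E x₀, y⟫).re = 0 ∧
      qf E y + 4 * (⟪E x₀, y⟫).re * (⟪x₀, y⟫).re
        - 4 * (⟪C x₀, y⟫).re * (⟪D x₀, y⟫).re = 0 := by
    intro y
    apply coeff_extract (p3 := 2 * (⟪E x₀, y⟫).re * ‖y‖ ^ 2 + 2 * qf E y * (⟪x₀, y⟫).re
        - 2 * (⟪C x₀, y⟫).re * qf D y - 2 * (⟪D x₀, y⟫).re * qf C y)
      (p4 := qf E y * ‖y‖ ^ 2 - qf C y * qf D y)
    intro t
    have h := hQI (x₀ + (t : ℂ) • y)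
    rw [qf_expand hC, qf_expand hD, qf_expand hE, norm_expand, hfC, hfD, hE0, hx] at h
    linear_combination h
  have hEx : E x₀ = 0 := by
    have h := (main (E x₀)).1
    have h : (⟪E x₀, E x₀⟫).re = 0 := by linarith
    have h2 : (⟪E x₀, E x₀⟫).re = ‖E x₀‖ ^ 2 := by
      have := inner_self_eq_norm_sq (𝕜 := ℂ) (E x₀)
      simpa [RCLike.re_to_complex] using this
    rw [h2] at h
    simpa using norm_eq_zero.mp (by nlinarith [norm_nonneg (E x₀)] : ‖E x₀‖ = 0)
  have star2 : ∀ y : H, qf E y = 4 * (⟪C x₀, y⟫).re * (⟪D x₀, y⟫).re := by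
    intro y
    have h := (main y).2
    rw [hEx] at h
    simp only [inner_zero_left, Complex.zero_re] at h
    linarith
  set c := C x₀ with hc
  set d := D x₀ with hd
  have hre : ∀ y : H, (⟪c, y⟫ * ⟪d, y⟫).re = 0 := by
    intro y
    have h1 := star2 y
    have h2 := star2 (Complex.I • y)
    rw [qf_smul] at h2
    simp only [inner_smul_right] at h2
    simp only [Complex.normSq_I, one_mul, Complex.mul_re, Complex.I_re, Complex.I_im] at h2
    rw [Complex.mul_re]
    nlinarith [h1, h2]
  have hZ : ∀ y : H, ⟪c, y⟫ * ⟪d, y⟫ = 0 := by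
    intro y
    have h1 := hre y
    have h2 := hre ((1 + Complex.I) • y)
    simp only [inner_smul_right] at h2
    have isq : (1 + Complex.I) * (1 + Complex.I) = 2 * Complex.I := by
      have := Complex.I_sq
      linear_combination this
    have e1 : (1 + Complex.I) * ⟪c, y⟫ * ((1 + Complex.I) * ⟪d, y⟫)
        = 2 * Complex.I * (⟪c, y⟫ * ⟪d, y⟫) := by linear_combination ⟪c, y⟫ * ⟪d, y⟫ * isq
    rw [e1] at h2
    have e2 : (2 * Complex.I * (⟪c, y⟫ * ⟪d, y⟫)).re = -2 * (⟪c, y⟫ * ⟪d, y⟫).im := by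
      simp [Complex.mul_re, Complex.mul_im]
    rw [e2] at h2
    have him : (⟪c, y⟫ * ⟪d, y⟫).im = 0 := by linarith
    exact Complex.ext h1 (by rw [him]; simp)
  by_cases hc0 : c = 0
  · exact Or.inl hc0
  · right
    have hcc : ⟪c, c⟫ ≠ 0 := inner_self_ne_zero.mpr hc0
    have hdc : ⟪d, c⟫ = 0 := by
      have := hZ c
      rcases mul_eq_zero.mp this with h | h
      · exact absurd h hcc
      · exact h
    have hall : ∀ w : H, ⟪d, w⟫ = 0 := by
      intro w
      by_cases hcw : ⟪c, w⟫ = 0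
      · have h := hZ (w + c)
        rw [inner_add_right, inner_add_right, hcw, zero_add] at h
        rcases mul_eq_zero.mp h with h' | h'
        · exact absurd h' hcc
        · rw [hdc, add_zero] at h'; exact h'
      · rcases mul_eq_zero.mp (hZ w) with h' | h'
        · exact absurd h' hcw
        · exact h'
    have := hall d
    exact inner_self_eq_zero.mp this

end VarOrder

namespace VarOrder

variable {H : Type*} [NormedAddCommGroup H] [InnerProductSpace ℂ H]

local notation "⟪" x ", " y "⟫" => @inner ℂ _ _ x y

lemma eig_all_scalar (C : H →L[ℂ] H) (e : H) (he : e ≠ 0)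
    (h : ∀ x : H, ∃ μ : ℂ, C x = μ • x) : ∃ γ : ℂ, C = γ • 1 := by
  obtain ⟨γ, hγ⟩ := h e
  refine ⟨γ, ?_⟩
  ext x
  simp only [ContinuousLinearMap.smul_apply, ContinuousLinearMap.one_apply]
  by_cases hdep : ∃ ρ : ℂ, x = ρ • e
  · obtain ⟨ρ, rfl⟩ := hdep
    rw [map_smul, hγ, smul_comm]
  · obtain ⟨l, h1⟩ := h x
    obtain ⟨m, h2⟩ := h (x + e)
    rw [map_add, h1, hγ, smul_add] at h2
    -- l • x + γ • e = m • x + m • e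
    have h3 : (l - m) • x = (m - γ) • e := by
      linear_combination (norm := module) h2
    by_cases hlm : l = m
    · rw [hlm, sub_self, zero_smul] at h3
      have hmγ : m = γ := by
        by_contra hne
        exact he (by
          have := h3.symm
          rwa [smul_eq_zero_iff_right (sub_ne_zero.mpr (Ne.symm (fun q => hne q.symm)))] at this)
      rw [h1, hlm, hmγ]
    · exfalso
      apply hdep
      refine ⟨(l - m)⁻¹ * (m - γ), ?_⟩
      rw [mul_smul, ← h3, inv_smul_smul₀ (sub_ne_zero.mpr hlm)]

lemma eig_ball (C : H →L[ℂ] H) (z : H) (hz : z ≠ 0) (ε : ℝ) (hε : 0 < ε)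
    (h : ∀ w ∈ Metric.ball z ε, ∃ μ : ℂ, C w = μ • w) :
    ∀ y : H, ∃ μ : ℂ, C y = μ • y := by
  obtain ⟨γ, hγ⟩ := h z (Metric.mem_ball_self hε)
  intro y
  by_cases hdep : ∃ ρ : ℂ, y = ρ • z
  · obtain ⟨ρ, rfl⟩ := hdep
    exact ⟨γ, by rw [map_smul, hγ, smul_comm]⟩
  · have hy0 : y ≠ 0 := fun hy => hdep ⟨0, by simp [hy]⟩
    set δ₁ : ℝ := ε / (2 * (‖y‖ + 1)) with hδ₁
    have hypos : (0:ℝ) < ‖y‖ + 1 := by positivity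
    have hδ₁pos : 0 < δ₁ := by positivity
    set δ₂ : ℝ := δ₁ / 2 with hδ₂
    have hδ₂pos : 0 < δ₂ := by positivity
    have hmem : ∀ δ : ℝ, 0 < δ → δ ≤ δ₁ → z + (δ:ℂ) • y ∈ Metric.ball z ε := by
      intro δ hδ hδle
      rw [Metric.mem_ball, dist_eq_norm]
      have h0 : z + (δ:ℂ) • y - z = (δ:ℂ) • y := by abel
      rw [h0, norm_smul, Complex.norm_real, Real.norm_eq_abs, abs_of_pos hδ]
      have : δ * ‖y‖ ≤ δ₁ * ‖y‖ := by nlinarith [norm_nonneg y]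
      have h2 : δ₁ * ‖y‖ < ε := by
        rw [hδ₁]
        rw [div_mul_eq_mul_div, div_lt_iff₀ (by positivity)]
        nlinarith [norm_nonneg y]
      linarith
    obtain ⟨μ₁, hμ₁⟩ := h _ (hmem δ₁ hδ₁pos le_rfl)
    obtain ⟨μ₂, hμ₂⟩ := h _ (hmem δ₂ hδ₂pos (by rw [hδ₂]; linarith))
    rw [map_add, map_smul, hγ] at hμ₁ hμ₂
    have heq : (((δ₂:ℂ) * (μ₁ - γ) - (δ₁:ℂ) * (μ₂ - γ)) • z : H)
        = ((μ₂ - μ₁) * (δ₁:ℂ) * (δ₂:ℂ)) • y := by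
      linear_combination (norm := module) (δ₁:ℂ) • hμ₂ - (δ₂:ℂ) • hμ₁
    have hδ₁0 : (δ₁:ℂ) ≠ 0 := by exact_mod_cast hδ₁pos.ne'
    have hδ₂0 : (δ₂:ℂ) ≠ 0 := by exact_mod_cast hδ₂pos.ne'
    have hμeq : μ₁ = μ₂ := by
      by_contra hne
      apply hdep
      have hb : (μ₂ - μ₁) * (δ₁:ℂ) * (δ₂:ℂ) ≠ 0 := by
        apply mul_ne_zero (mul_ne_zero _ hδ₁0) hδ₂0
        exact sub_ne_zero.mpr (Ne.symm hne)
      refine ⟨((μ₂ - μ₁) * (δ₁:ℂ) * (δ₂:ℂ))⁻¹ * ((δ₂:ℂ) * (μ₁ - γ) - (δ₁:ℂ) * (μ₂ - γ)), ?_⟩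
      rw [mul_smul, heq, inv_smul_smul₀ hb]
    rw [← hμeq] at heq
    have hcoef : ((δ₂:ℂ) * (μ₁ - γ) - (δ₁:ℂ) * (μ₁ - γ)) = 0 := by
      have h0 : (((δ₂:ℂ) * (μ₁ - γ) - (δ₁:ℂ) * (μ₁ - γ)) • z : H) = 0 := by
        rw [heq]; simp
      rcases smul_eq_zero.mp h0 with h | h
      · exact h
      · exact absurd h hz
    have hμγ : μ₁ = γ := by
      have hd : (δ₂:ℂ) - (δ₁:ℂ) ≠ 0 := by
        rw [sub_ne_zero]
        intro hq
        have : δ₂ = δ₁ := by exact_mod_cast hq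
        linarith
      have h1 : ((δ₂:ℂ) - (δ₁:ℂ)) * (μ₁ - γ) = 0 := by linear_combination hcoef
      rcases mul_eq_zero.mp h1 with h | h
      · exact absurd h hd
      · rw [sub_eq_zero] at h; exact h
    refine ⟨γ, ?_⟩
    rw [hμγ] at hμ₁
    have hfin : (δ₁:ℂ) • C y = (δ₁:ℂ) • (γ • y) := by
      linear_combination (norm := module) hμ₁
    exact smul_right_injective H hδ₁0 hfin

end VarOrder

namespace VarOrder

variable {H : Type*} [NormedAddCommGroup H] [InnerProductSpace ℂ H]

local notation "⟪" x ", " y "⟫" => @inner ℂ _ _ x y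

lemma eig_iff (C : H →L[ℂ] H) (x : H) :
    (∃ μ : ℂ, C x = μ • x) ↔ ‖x‖ ^ 2 * ‖C x‖ ^ 2 - ‖(⟪x, C x⟫ : ℂ)‖ ^ 2 = 0 := by
  constructor
  · rintro ⟨μ, hμ⟩
    rw [hμ, inner_smul_right, norm_smul, norm_mul]
    have h0 : ‖(⟪x, x⟫ : ℂ)‖ = ‖x‖ ^ 2 := by
      rw [inner_self_eq_norm_sq_to_K, norm_pow]
      norm_num [Complex.norm_real, Real.norm_eq_abs, abs_norm]
    rw [h0]
    ring
  · intro hG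
    by_cases hx : x = 0
    · exact ⟨0, by simp [hx]⟩
    by_cases hCx : C x = 0
    · exact ⟨0, by simp [hCx]⟩
    have h1 : ‖(⟪x, C x⟫ : ℂ)‖ = ‖x‖ * ‖C x‖ := by
      have h2 : ‖(⟪x, C x⟫ : ℂ)‖ ^ 2 = (‖x‖ * ‖C x‖) ^ 2 := by ring_nf; ring_nf at hG; linarith
      calc ‖(⟪x, C x⟫ : ℂ)‖ = Real.sqrt (‖(⟪x, C x⟫ : ℂ)‖ ^ 2) := by
              rw [Real.sqrt_sq (norm_nonneg _)]
        _ = Real.sqrt ((‖x‖ * ‖C x‖) ^ 2) := by rw [h2]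
        _ = ‖x‖ * ‖C x‖ := Real.sqrt_sq (by positivity)
    obtain ⟨r, hr0, hr⟩ := (norm_inner_eq_norm_iff hx hCx).mp h1
    exact ⟨r, hr⟩

lemma isOpen_nonscalar (C : H →L[ℂ] H) :
    IsOpen {x : H | ¬ ∃ μ : ℂ, C x = μ • x} := by
  have hset : {x : H | ¬ ∃ μ : ℂ, C x = μ • x}
      = (fun x : H => ‖x‖ ^ 2 * ‖C x‖ ^ 2 - ‖(⟪x, C x⟫ : ℂ)‖ ^ 2) ⁻¹' {(0:ℝ)}ᶜ := by
    ext x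
    simp only [Set.mem_setOf_eq, Set.mem_preimage, Set.mem_compl_iff, Set.mem_singleton_iff]
    rw [eig_iff]
  rw [hset]
  apply IsOpen.preimage ?_ isOpen_compl_singleton
  have : Continuous fun x : H => (⟪x, C x⟫ : ℂ) := Continuous.inner continuous_id C.continuous
  continuity

lemma dense_nonscalar (C : H →L[ℂ] H) (e : H) (he : e ≠ 0)
    (hns : ¬ ∃ γ : ℂ, C = γ • 1) :
    Dense {x : H | ¬ ∃ μ : ℂ, C x = μ • x} := by
  rw [dense_iff_inter_open]
  intro U hU hUne
  by_contra hempty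
  rw [Set.not_nonempty_iff_eq_empty] at hempty
  have hsub : U ⊆ {x : H | ∃ μ : ℂ, C x = μ • x} := by
    intro x hx
    by_contra hxn
    exact Set.eq_empty_iff_forall_notMem.mp hempty x ⟨hx, hxn⟩
  obtain ⟨z, hz⟩ := hUne
  obtain ⟨ε, hε, hball⟩ := Metric.isOpen_iff.mp hU z hz
  -- get a nonzero center
  obtain ⟨z', hz', ε', hε', hball'⟩ : ∃ z' : H, z' ≠ 0 ∧ ∃ ε' : ℝ, 0 < ε' ∧
      Metric.ball z' ε' ⊆ Metric.ball z ε := by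
    by_cases hz0 : z = 0
    · refine ⟨(ε/2) • ‖e‖⁻¹ • e, ?_, ε/2, by linarith, ?_⟩
      · have hne : ‖(ε/2) • ‖e‖⁻¹ • e‖ = ε/2 := by
          rw [norm_smul, norm_smul, norm_inv, norm_norm, Real.norm_eq_abs,
            abs_of_pos (by linarith : (0:ℝ) < ε/2)]
          have hepos : (0:ℝ) < ‖e‖ := norm_pos_iff.mpr he
          field_simp
        intro hq
        rw [hq, norm_zero] at hne
        linarith
      · intro w hw
        rw [Metric.mem_ball] at hw ⊢
        have hd : dist ((ε/2) • ‖e‖⁻¹ • e) z = ε/2 := by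
          rw [hz0, dist_zero_right, norm_smul, norm_smul, norm_inv, norm_norm,
            Real.norm_eq_abs, abs_of_pos (by linarith : (0:ℝ) < ε/2)]
          have hepos : (0:ℝ) < ‖e‖ := norm_pos_iff.mpr he
          field_simp
        calc dist w z ≤ dist w ((ε/2) • ‖e‖⁻¹ • e) + dist ((ε/2) • ‖e‖⁻¹ • e) z :=
              dist_triangle _ _ _
          _ < ε/2 + ε/2 := by rw [hd]; linarith
          _ = ε := by ring
    · exact ⟨z, hz0, ε, hε, le_refl _⟩
  apply hns
  apply eig_all_scalar C e he
  exact eig_ball C z' hz' ε' hε' (fun w hw => hsub (hball (hball' hw)) )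

end VarOrder

namespace VarOrder

variable {H : Type*} [NormedAddCommGroup H] [InnerProductSpace ℂ H]

local notation "⟪" x ", " y "⟫" => @inner ℂ _ _ x y

noncomputable def variance' (A : H →L[ℂ] H) (x : H) : ℝ :=
  (⟪A (A x), x⟫).re - ((⟪A x, x⟫).re) ^ 2

lemma variance'_eq (A : H →L[ℂ] H) (x : H) :
    variance' A x = qf (A * A) x - (qf A x) ^ 2 := rfl

lemma baseQI (A B : H →L[ℂ] H)
    (h : ∀ x : H, ‖x‖ = 1 → variance' A x = variance' B x) :
    ∀ x : H, qf (A * A - B * B) x * ‖x‖ ^ 2 = qf (A + B) x * qf (A - B) x := by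
  intro x
  by_cases hx : x = 0
  · simp [hx, qf]
  · have hr : (0:ℝ) < ‖x‖ := norm_pos_iff.mpr hx
    set u : H := ((‖x‖ : ℂ))⁻¹ • x with hu
    have hu1 : ‖u‖ = 1 := norm_smul_inv_norm hx
    have hv := h u hu1
    rw [variance'_eq, variance'_eq] at hv
    rw [hu] at hv
    rw [qf_smul, qf_smul, qf_smul, qf_smul] at hv
    have hns : Complex.normSq ((‖x‖ : ℂ))⁻¹ = (‖x‖ ^ 2)⁻¹ := by
      rw [map_inv₀, Complex.normSq_ofReal]
      ring
    rw [hns] at hv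
    rw [qf_sub_op, qf_add_op, qf_sub_op]
    have h2 : (‖x‖ ^ 2) ≠ 0 := by positivity
    field_simp at hv
    have key : ((qf (A * A) x - qf (B * B) x) * ‖x‖ ^ 2) * ‖x‖ ^ 2
        = ((qf A x + qf B x) * (qf A x - qf B x)) * ‖x‖ ^ 2 := by linear_combination ‖x‖ ^ 2 * hv
    have key2 := mul_right_cancel₀ h2 key
    linear_combination key2

lemma inner_self_re (x : H) : (⟪x, x⟫).re = ‖x‖ ^ 2 := by
  have := inner_self_eq_norm_sq (𝕜 := ℂ) x
  simpa [RCLike.re_to_complex] using this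

lemma inner_self_im (x : H) : (⟪x, x⟫).im = 0 := by
  have : (⟪x, x⟫ : ℂ) = ((‖x‖ : ℝ) : ℂ) ^ 2 := inner_self_eq_norm_sq_to_K x
  rw [this]
  simp [← Complex.ofReal_pow]

lemma variance'_shift (A : H →L[ℂ] H) (c : ℝ) (x : H) (hx : ‖x‖ = 1) :
    variance' (A + (c : ℂ) • 1) x = variance' A x := by
  have h1 : (⟪x, x⟫).re = 1 := by rw [inner_self_re, hx]; norm_num
  have h2 : (⟪x, x⟫).im = 0 := inner_self_im x
  simp only [variance', ContinuousLinearMap.add_apply, ContinuousLinearMap.smul_apply,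
    ContinuousLinearMap.one_apply, map_add, map_smul, inner_add_left, inner_smul_left,
    Complex.conj_ofReal, Complex.add_re, Complex.mul_re, Complex.ofReal_re, Complex.ofReal_im,
    Complex.add_im, Complex.mul_im]
  rw [h1, h2]
  ring

lemma variance'_neg_shift (A : H →L[ℂ] H) (c : ℝ) (x : H) (hx : ‖x‖ = 1) :
    variance' (-A + (c : ℂ) • 1) x = variance' A x := by
  have h1 : (⟪x, x⟫).re = 1 := by rw [inner_self_re, hx]; norm_num
  have h2 : (⟪x, x⟫).im = 0 := inner_self_im x
  simp only [variance', ContinuousLinearMap.add_apply, ContinuousLinearMap.smul_apply,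
    ContinuousLinearMap.one_apply, ContinuousLinearMap.neg_apply, map_add, map_smul, map_neg,
    inner_add_left, inner_smul_left, inner_neg_left,
    Complex.conj_ofReal, Complex.add_re, Complex.mul_re, Complex.ofReal_re, Complex.ofReal_im,
    Complex.add_im, Complex.mul_im, Complex.neg_re, Complex.neg_im]
  rw [h1, h2]
  ring

lemma scalar_re [CompleteSpace H] (C : H →L[ℂ] H) (hC : IsSelfAdjoint C) (e : H) (he : e ≠ 0)
    (γ : ℂ) (h : C = γ • 1) : ∃ r : ℝ, C = ((r : ℝ) : ℂ) • 1 := by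
  refine ⟨γ.re, ?_⟩
  have hs := hC.isSymmetric e e
  simp only [ContinuousLinearMap.coe_coe] at hs
  rw [h] at hs
  simp only [ContinuousLinearMap.smul_apply, ContinuousLinearMap.one_apply,
    inner_smul_left, inner_smul_right] at hs
  have hee : (⟪e, e⟫ : ℂ) ≠ 0 := inner_self_ne_zero.mpr he
  have hγ : (starRingEnd ℂ) γ = γ := mul_right_cancel₀ hee hs
  have hre : γ = ((γ.re : ℝ) : ℂ) := (Complex.conj_eq_iff_re).mp hγ |>.symm
  rw [h, ← hre]

theorem main [CompleteSpace H] (A B : H →L[ℂ] H) (hA : IsSelfAdjoint A) (hB : IsSelfAdjoint B)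
    (h : ∀ x : H, ‖x‖ = 1 → variance' A x = variance' B x) :
    ∃ c : ℝ, B = A + (c : ℂ) • (1 : H →L[ℂ] H) ∨ B = -A + (c : ℂ) • (1 : H →L[ℂ] H) := by
  by_contra hnot
  push_neg at hnot
  set C : H →L[ℂ] H := A + B with hCdef
  set D : H →L[ℂ] H := A - B with hDdef
  have hC : IsSelfAdjoint C := hA.add hB
  have hD : IsSelfAdjoint D := hA.sub hB
  rcases subsingleton_or_nontrivial H with hsub | hnt
  · exact (hnot 0).1 (by ext x; exact Subsingleton.elim _ _)
  obtain ⟨e, he⟩ := exists_ne (0 : H)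
  have hCns : ¬ ∃ γ : ℂ, C = γ • 1 := by
    rintro ⟨γ, hγ⟩
    obtain ⟨r, hr⟩ := scalar_re C hC e he γ hγ
    refine (hnot r).2 ?_
    have : A + B = ((r : ℝ) : ℂ) • 1 := by rw [← hCdef, hr]
    calc B = -A + (A + B) := by abel
      _ = -A + ((r : ℝ) : ℂ) • 1 := by rw [this]
  have hDns : ¬ ∃ γ : ℂ, D = γ • 1 := by
    rintro ⟨γ, hγ⟩
    obtain ⟨r, hr⟩ := scalar_re D hD e he γ hγ
    refine (hnot (-r)).1 ?_
    have : A - B = ((r : ℝ) : ℂ) • 1 := by rw [← hDdef, hr]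
    have hcast : (((-r : ℝ)) : ℂ) = -((r : ℝ) : ℂ) := by push_cast; ring
    calc B = A - (A - B) := by abel
      _ = A - ((r : ℝ) : ℂ) • 1 := by rw [this]
      _ = A + (((-r : ℝ)) : ℂ) • 1 := by rw [hcast, neg_smul]; abel
  have hdense := (dense_nonscalar C e he hCns).inter_of_isOpen_left
    (dense_nonscalar D e he hDns) (isOpen_nonscalar C)
  obtain ⟨x₁, hx₁C, hx₁D⟩ := hdense.nonempty
  have hx₁0 : x₁ ≠ 0 := by
    rintro rfl
    exact hx₁C ⟨0, by simp⟩
  set x₀ : H := ((‖x₁‖ : ℂ))⁻¹ • x₁ with hx₀def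
  have hx₀ : ‖x₀‖ = 1 := norm_smul_inv_norm hx₁0
  have hx₁x₀ : x₁ = ((‖x₁‖ : ℂ)) • x₀ := by
    rw [hx₀def, smul_smul, mul_inv_cancel₀ (by exact_mod_cast norm_ne_zero_iff.mpr hx₁0), one_smul]
  have hx₀C : ¬ ∃ μ : ℂ, C x₀ = μ • x₀ := by
    rintro ⟨μ, hμ⟩
    refine hx₁C ⟨μ, ?_⟩
    rw [hx₁x₀, map_smul, hμ, smul_comm]
  have hx₀D : ¬ ∃ μ : ℂ, D x₀ = μ • x₀ := by
    rintro ⟨μ, hμ⟩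
    refine hx₁D ⟨μ, ?_⟩
    rw [hx₁x₀, map_smul, hμ, smul_comm]
  set c₀ : ℝ := qf C x₀ with hc₀
  set d₀ : ℝ := qf D x₀ with hd₀
  set C' : H →L[ℂ] H := C - (c₀ : ℂ) • 1 with hC'def
  set D' : H →L[ℂ] H := D - (d₀ : ℂ) • 1 with hD'def
  set E : H →L[ℂ] H := A * A - B * B with hEdef
  set E' : H →L[ℂ] H := E - (c₀ : ℂ) • D - (d₀ : ℂ) • C + ((c₀ * d₀ : ℝ) : ℂ) • 1 with hE'def
  have hsm : ∀ (r : ℝ) (T : H →L[ℂ] H), IsSelfAdjoint T → IsSelfAdjoint ((r : ℂ) • T) := by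
    intro r T hT
    rw [IsSelfAdjoint, star_smul, hT.star_eq, RCLike.star_def, Complex.conj_ofReal]
  have hone : IsSelfAdjoint (1 : H →L[ℂ] H) := IsSelfAdjoint.one _
  have hC' : IsSelfAdjoint C' := hC.sub (hsm _ _ hone)
  have hD' : IsSelfAdjoint D' := hD.sub (hsm _ _ hone)
  have hE : IsSelfAdjoint E := by
    have h1 : IsSelfAdjoint (A * A) := by rw [IsSelfAdjoint, star_mul, hA.star_eq]
    have h2 : IsSelfAdjoint (B * B) := by rw [IsSelfAdjoint, star_mul, hB.star_eq]
    exact h1.sub h2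
  have hE' : IsSelfAdjoint E' :=
    ((hE.sub (hsm _ _ hD)).sub (hsm _ _ hC)).add (hsm _ _ hone)
  have hQI : ∀ x : H, qf E' x * ‖x‖ ^ 2 = qf C' x * qf D' x := by
    intro x
    have h0 := baseQI A B h x
    rw [← hCdef, ← hDdef, ← hEdef] at h0
    rw [hE'def, hC'def, hD'def]
    simp only [qf_add_op, qf_sub_op, qf_smul_op, qf_one]
    linear_combination h0
  have hfC' : qf C' x₀ = 0 := by
    rw [hC'def, qf_sub_op, qf_smul_op, qf_one, hx₀, ← hc₀]
    ring
  have hfD' : qf D' x₀ = 0 := by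
    rw [hD'def, qf_sub_op, qf_smul_op, qf_one, hx₀, ← hd₀]
    ring
  rcases key C' D' E' hC' hD' hE' x₀ hx₀ hfC' hfD' hQI with h0 | h0
  · refine hx₀C ⟨(c₀ : ℂ), ?_⟩
    have := h0
    rw [hC'def] at this
    simp only [ContinuousLinearMap.sub_apply, ContinuousLinearMap.smul_apply,
      ContinuousLinearMap.one_apply, sub_eq_zero] at this
    exact this
  · refine hx₀D ⟨(d₀ : ℂ), ?_⟩
    have := h0
    rw [hD'def] at this
    simp only [ContinuousLinearMap.sub_apply, ContinuousLinearMap.smul_apply,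
      ContinuousLinearMap.one_apply, sub_eq_zero] at this
    exact this

end VarOrder


/-- Corollary 2.2: `A ⪯ B` and `B ⪯ A` hold simultaneously iff `B = A + cI` or
`B = -A + cI` for some real `c`. -/
theorem varLE_antisymm_iff {H : Type*} [NormedAddCommGroup H] [InnerProductSpace ℂ H]
    [CompleteSpace H] (A B : H →L[ℂ] H) (hA : IsSelfAdjoint A) (hB : IsSelfAdjoint B) :
    (VarLE A B ∧ VarLE B A) ↔
      ∃ c : ℝ, B = A + (c : ℂ) • (1 : H →L[ℂ] H) ∨ B = -A + (c : ℂ) • (1 : H →L[ℂ] H) := by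
  have hvv : ∀ (T : H →L[ℂ] H) (x : H), variance T x = VarOrder.variance' T x := fun T x => rfl
  constructor
  · rintro ⟨h1, h2⟩
    apply VarOrder.main A B hA hB
    intro x hx
    rw [← hvv, ← hvv]
    exact le_antisymm (h1 x hx) (h2 x hx)
  · rintro ⟨c, hc | hc⟩
    · subst hc
      constructor <;> intro x hx <;> rw [hvv, hvv, VarOrder.variance'_shift A c x hx]
    · subst hc
      constructor <;> intro x hx <;> rw [hvv, hvv, VarOrder.variance'_neg_shift A c x hx]
end

section
/- Let H be a complex Hilbert space, A a bounded self-adjoint operator on H, and let (x_n), (y_n) be sequences of unit vectors with ‖A x_n − λ x_n‖ → 0 and ‖A y_n − μ y_n‖ → 0, where λ, μ ∈ ℝ and λ ≠ μ. Let α, β ∈ ℝ \ {0}. Then α x_n + β y_n ≠ 0 for all sufficiently large n, and setting z_n := (α x_n + β y_n)/‖α x_n + β y_n‖ for those n, one has Δ_{z_n}(A) → α²β²(λ − μ)²/(α² + β²)² as n → ∞. (Lemma 3.2.) -/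
open Filter

/-- Lemma 3.2: if `(x_n)`, `(y_n)` are approximate eigenvectors of `A` with distinct
approximate eigenvalues `λ ≠ μ` and `α, β` are nonzero reals, then `α x_n + β y_n ≠ 0`
eventually, and the variance of `A` at the normalisation of `α x_n + β y_n` tends to
`α²β²(λ − μ)²/(α² + β²)²`. -/
theorem variance_of_combination_tendsto {H : Type*} [NormedAddCommGroup H]
    [InnerProductSpace ℂ H] [CompleteSpace H] (A : H →L[ℂ] H) (hA : IsSelfAdjoint A)
    (lam mu : ℝ) (hlm : lam ≠ mu) (x y : ℕ → H)
    (hx1 : ∀ n, ‖x n‖ = 1) (hy1 : ∀ n, ‖y n‖ = 1)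
    (hx : Tendsto (fun n => ‖A (x n) - lam • x n‖) atTop (nhds 0))
    (hy : Tendsto (fun n => ‖A (y n) - mu • y n‖) atTop (nhds 0))
    (α β : ℝ) (hα : α ≠ 0) (hβ : β ≠ 0) :
    (∀ᶠ n in atTop, α • x n + β • y n ≠ 0) ∧
      Tendsto (fun n => variance A (‖α • x n + β • y n‖⁻¹ • (α • x n + β • y n))) atTop
        (nhds (α ^ 2 * β ^ 2 * (lam - mu) ^ 2 / (α ^ 2 + β ^ 2) ^ 2)) := by
  have isl : ∀ (r : ℝ) (a b : H), (inner ℂ (r • a) b : ℂ) = (r : ℂ) * inner ℂ a b := by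
    intro r a b
    have h : r • a = (r : ℂ) • a := by simp
    rw [h, inner_smul_left]; simp
  have isr : ∀ (r : ℝ) (a b : H), (inner ℂ a (r • b) : ℂ) = (r : ℂ) * inner ℂ a b := by
    intro r a b
    have h : r • b = (r : ℂ) • b := by simp
    rw [h, inner_smul_right]
  have hsm : ∀ (r : ℝ) (z : H), A (r • z) = r • A z := fun r z => A.map_smul_of_tower r z
  set u : ℕ → H := fun n => A (x n) - lam • x n with hu_def
  set v : ℕ → H := fun n => A (y n) - mu • y n with hv_def
  have hu : Tendsto (fun n => ‖u n‖) atTop (nhds 0) := hx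
  have hv : Tendsto (fun n => ‖v n‖) atTop (nhds 0) := hy
  have hAx : ∀ n, A (x n) = lam • x n + u n := fun n => by simp [hu_def]
  have hAy : ∀ n, A (y n) = mu • y n + v n := fun n => by simp [hv_def]
  have hlm' : (0:ℝ) < |lam - mu| := abs_pos.mpr (sub_ne_zero.mpr hlm)
  -- inner ℂ products of x and y tend to 0
  have habs : ∀ n, ‖(inner ℂ (x n) (y n) : ℂ)‖ ≤ (‖u n‖ + ‖v n‖) / |lam - mu| := by
    intro n
    have key : ((lam : ℂ) - mu) * inner ℂ (x n) (y n) =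
        inner ℂ (x n) (v n) - (inner ℂ (u n) (y n) : ℂ) := by
      have h1 : (inner ℂ (A (x n)) (y n) : ℂ) = inner ℂ (x n) (A (y n)) := hA.isSymmetric _ _
      rw [hAx n, hAy n, inner_add_left, inner_add_right, isl, isr] at h1
      linear_combination h1
    have h2 : ‖((lam : ℂ) - mu) * inner ℂ (x n) (y n)‖ ≤ ‖u n‖ + ‖v n‖ := by
      rw [key]
      calc ‖(inner ℂ (x n) (v n) : ℂ) - inner ℂ (u n) (y n)‖
          ≤ ‖(inner ℂ (x n) (v n) : ℂ)‖ + ‖(inner ℂ (u n) (y n) : ℂ)‖ := norm_sub_le _ _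
        _ ≤ ‖x n‖ * ‖v n‖ + ‖u n‖ * ‖y n‖ :=
            add_le_add (norm_inner_le_norm _ _) (norm_inner_le_norm _ _)
        _ = ‖u n‖ + ‖v n‖ := by rw [hx1, hy1]; ring
    rw [norm_mul] at h2
    have hne : ‖((lam : ℂ) - mu)‖ = |lam - mu| := by
      rw [← Complex.ofReal_sub, Complex.norm_real]; exact Real.norm_eq_abs _
    rw [hne] at h2
    rw [le_div_iff₀ hlm']
    linarith [h2]
  have hcnorm : Tendsto (fun n => ‖(inner ℂ (x n) (y n) : ℂ)‖) atTop (nhds 0) := by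
    apply squeeze_zero (fun n => norm_nonneg _) habs
    have := (hu.add hv).div_const |lam - mu|
    simpa using this
  have hc : Tendsto (fun n => (inner ℂ (x n) (y n) : ℂ)) atTop (nhds 0) :=
    tendsto_zero_iff_norm_tendsto_zero.mpr hcnorm
  have hc2 : Tendsto (fun n => (inner ℂ (y n) (x n) : ℂ)) atTop (nhds 0) := by
    have hst := (continuous_star.tendsto (0 : ℂ)).comp hc
    simp only [Function.comp_def, star_zero] at hst
    refine hst.congr fun n => ?_
    simpa using inner_conj_symm (y n) (x n)
  have hre : Tendsto (fun n => (inner ℂ (x n) (y n) : ℂ).re) atTop (nhds 0) := by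
    have := (Complex.continuous_re.tendsto (0 : ℂ)).comp hc
    simpa [Function.comp_def] using this
  -- abbreviations
  set w : ℕ → H := fun n => α • x n + β • y n with hw_def
  set e : ℕ → H := fun n => α • u n + β • v n with he_def
  set p : ℕ → H := fun n => (α * lam) • x n + (β * mu) • y n with hp_def
  have hAw : ∀ n, A (w n) = p n + e n := by
    intro n
    simp only [hw_def, hp_def, he_def, map_add, hsm, hAx n, hAy n, smul_add, smul_smul]
    module
  have he : Tendsto (fun n => ‖e n‖) atTop (nhds 0) := by
    apply squeeze_zero (fun n => norm_nonneg _) (g := fun n => |α| * ‖u n‖ + |β| * ‖v n‖)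
    · intro n
      calc ‖e n‖ ≤ ‖α • u n‖ + ‖β • v n‖ := norm_add_le _ _
        _ = |α| * ‖u n‖ + |β| * ‖v n‖ := by rw [norm_smul, norm_smul]; simp [Real.norm_eq_abs]
    · simpa using (hu.const_mul |α|).add (hv.const_mul |β|)
  have haa : ∀ n, (inner ℂ (x n) (x n) : ℂ) = 1 := by
    intro n; rw [inner_self_eq_norm_sq_to_K, hx1]; norm_num
  have hbb : ∀ n, (inner ℂ (y n) (y n) : ℂ) = 1 := by
    intro n; rw [inner_self_eq_norm_sq_to_K, hy1]; norm_num
  -- squared norm of w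
  have hwsq : ∀ n, ‖w n‖ ^ 2 = α ^ 2 + β ^ 2 + 2 * α * β * (inner ℂ (x n) (y n) : ℂ).re := by
    intro n
    have h0 : ‖w n‖ ^ 2 = ‖α • x n‖ ^ 2 + 2 * (inner ℂ (α • x n) (β • y n) : ℂ).re
        + ‖β • y n‖ ^ 2 := by
      exact norm_add_sq (𝕜 := ℂ) (α • x n) (β • y n)
    rw [h0, isl, isr, norm_smul, norm_smul, hx1, hy1]
    rw [← mul_assoc, ← Complex.ofReal_mul, Complex.re_ofReal_mul]
    simp [Real.norm_eq_abs, mul_pow, sq_abs]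
    ring
  have hs : Tendsto (fun n => ‖w n‖ ^ 2) atTop (nhds (α ^ 2 + β ^ 2)) := by
    have h1 : Tendsto (fun n => α ^ 2 + β ^ 2 + 2 * α * β * (inner ℂ (x n) (y n) : ℂ).re)
        atTop (nhds (α ^ 2 + β ^ 2 + 2 * α * β * 0)) :=
      tendsto_const_nhds.add (hre.const_mul (2 * α * β))
    simp only [mul_zero, add_zero] at h1
    exact h1.congr fun n => (hwsq n).symm
  have hsumpos : (0:ℝ) < α ^ 2 + β ^ 2 := by positivity
  have hwne : ∀ᶠ n in atTop, w n ≠ 0 := by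
    have hpos : ∀ᶠ n in atTop, 0 < ‖w n‖ ^ 2 := hs.eventually (eventually_gt_nhds hsumpos)
    filter_upwards [hpos] with n hn h0
    rw [h0] at hn; simp at hn
  -- inner ℂ (A w) w
  have hiew : Tendsto (fun n => (inner ℂ (e n) (w n) : ℂ)) atTop (nhds 0) := by
    rw [tendsto_zero_iff_norm_tendsto_zero]
    apply squeeze_zero (fun n => norm_nonneg _) (g := fun n => ‖e n‖ * (|α| + |β|))
    · intro n
      calc ‖(inner ℂ (e n) (w n) : ℂ)‖ ≤ ‖e n‖ * ‖w n‖ := norm_inner_le_norm _ _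
        _ ≤ ‖e n‖ * (|α| + |β|) := by
            apply mul_le_mul_of_nonneg_left _ (norm_nonneg _)
            calc ‖w n‖ ≤ ‖α • x n‖ + ‖β • y n‖ := norm_add_le _ _
              _ = |α| + |β| := by rw [norm_smul, norm_smul, hx1, hy1]; simp [Real.norm_eq_abs]
    · simpa using he.mul_const (|α| + |β|)
  have hid1 : ∀ n, (inner ℂ (A (w n)) (w n) : ℂ) = ((α ^ 2 * lam + β ^ 2 * mu : ℝ) : ℂ)
      + ((α * β * lam : ℝ) : ℂ) * inner ℂ (x n) (y n)
      + ((α * β * mu : ℝ) : ℂ) * inner ℂ (y n) (x n) + inner ℂ (e n) (w n) := by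
    intro n
    rw [hAw n, inner_add_left]
    simp only [hw_def, hp_def, inner_add_left, inner_add_right, isl, isr, haa n, hbb n]
    push_cast
    ring
  have ht : Tendsto (fun n => (inner ℂ (A (w n)) (w n) : ℂ).re) atTop
      (nhds (α ^ 2 * lam + β ^ 2 * mu)) := by
    have hC : Tendsto (fun n => (inner ℂ (A (w n)) (w n) : ℂ)) atTop
        (nhds ((α ^ 2 * lam + β ^ 2 * mu : ℝ) : ℂ)) := by
      have h1 : Tendsto (fun n => ((α ^ 2 * lam + β ^ 2 * mu : ℝ) : ℂ)
          + ((α * β * lam : ℝ) : ℂ) * inner ℂ (x n) (y n)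
          + ((α * β * mu : ℝ) : ℂ) * inner ℂ (y n) (x n) + inner ℂ (e n) (w n)) atTop
          (nhds (((α ^ 2 * lam + β ^ 2 * mu : ℝ) : ℂ)
            + ((α * β * lam : ℝ) : ℂ) * 0 + ((α * β * mu : ℝ) : ℂ) * 0 + 0)) :=
        ((tendsto_const_nhds.add (hc.const_mul _)).add (hc2.const_mul _)).add hiew
      simp only [mul_zero, add_zero] at h1
      exact h1.congr fun n => (hid1 n).symm
    have h2 := (Complex.continuous_re.tendsto _).comp hC
    simp only [Function.comp_def, Complex.ofReal_re] at h2
    exact h2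
  -- squared norm of A w
  have hpsq : ∀ n, ‖p n‖ ^ 2 = (α * lam) ^ 2 + (β * mu) ^ 2
      + 2 * (α * lam) * (β * mu) * (inner ℂ (x n) (y n) : ℂ).re := by
    intro n
    have h0 : ‖p n‖ ^ 2 = ‖(α * lam) • x n‖ ^ 2
        + 2 * (inner ℂ ((α * lam) • x n) ((β * mu) • y n) : ℂ).re + ‖(β * mu) • y n‖ ^ 2 := by
      exact norm_add_sq (𝕜 := ℂ) ((α * lam) • x n) ((β * mu) • y n)
    rw [h0, isl, isr, norm_smul, norm_smul, hx1, hy1]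
    rw [← mul_assoc, ← Complex.ofReal_mul, Complex.re_ofReal_mul]
    simp [Real.norm_eq_abs, mul_pow, sq_abs]
    ring
  have hpb : ∀ n, ‖p n‖ ≤ |α * lam| + |β * mu| := by
    intro n
    calc ‖p n‖ ≤ ‖(α * lam) • x n‖ + ‖(β * mu) • y n‖ := norm_add_le _ _
      _ = |α * lam| + |β * mu| := by
          rw [norm_smul, norm_smul, hx1, hy1]; simp [Real.norm_eq_abs, abs_mul]
  have hpe : Tendsto (fun n => (inner ℂ (p n) (e n) : ℂ).re) atTop (nhds 0) := by
    have hb : ∀ n, ‖(inner ℂ (p n) (e n) : ℂ).re‖ ≤ (|α * lam| + |β * mu|) * ‖e n‖ := by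
      intro n
      calc ‖(inner ℂ (p n) (e n) : ℂ).re‖ ≤ ‖(inner ℂ (p n) (e n) : ℂ)‖ :=
            Complex.abs_re_le_norm _
        _ ≤ ‖p n‖ * ‖e n‖ := norm_inner_le_norm _ _
        _ ≤ (|α * lam| + |β * mu|) * ‖e n‖ :=
            mul_le_mul_of_nonneg_right (hpb n) (norm_nonneg _)
    have ht0 : Tendsto (fun n => (|α * lam| + |β * mu|) * ‖e n‖) atTop (nhds 0) := by
      simpa using he.const_mul (|α * lam| + |β * mu|)
    exact squeeze_zero_norm hb ht0
  have hg : Tendsto (fun n => ‖A (w n)‖ ^ 2) atTop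
      (nhds (α ^ 2 * lam ^ 2 + β ^ 2 * mu ^ 2)) := by
    have hn2 : Tendsto (fun n => ‖e n‖ ^ 2) atTop (nhds 0) := by
      have := he.pow 2
      simpa using this
    have h1 : Tendsto (fun n => ((α * lam) ^ 2 + (β * mu) ^ 2
        + 2 * (α * lam) * (β * mu) * (inner ℂ (x n) (y n) : ℂ).re)
        + (2 * (inner ℂ (p n) (e n) : ℂ).re + ‖e n‖ ^ 2)) atTop
        (nhds (((α * lam) ^ 2 + (β * mu) ^ 2 + 2 * (α * lam) * (β * mu) * 0) + (2 * 0 + 0))) :=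
      (tendsto_const_nhds.add (hre.const_mul _)).add ((hpe.const_mul 2).add hn2)
    simp only [mul_zero, add_zero] at h1
    have h2 : ∀ n, ‖A (w n)‖ ^ 2 = ((α * lam) ^ 2 + (β * mu) ^ 2
        + 2 * (α * lam) * (β * mu) * (inner ℂ (x n) (y n) : ℂ).re)
        + (2 * (inner ℂ (p n) (e n) : ℂ).re + ‖e n‖ ^ 2) := by
      intro n
      rw [hAw n]
      have h0 : ‖p n + e n‖ ^ 2 = ‖p n‖ ^ 2 + 2 * (inner ℂ (p n) (e n) : ℂ).re + ‖e n‖ ^ 2 := by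
        simpa using norm_add_sq (𝕜 := ℂ) (p n) (e n)
      rw [h0, hpsq n]; ring
    have h3 := h1.congr fun n => (h2 n).symm
    convert h3 using 2
    ring
  -- variance identity
  have hvar : ∀ n, w n ≠ 0 → variance A (‖w n‖⁻¹ • w n) =
      ‖A (w n)‖ ^ 2 / ‖w n‖ ^ 2 - ((inner ℂ (A (w n)) (w n) : ℂ).re / ‖w n‖ ^ 2) ^ 2 := by
    intro n hn
    have hnorm : ‖w n‖ ≠ 0 := norm_ne_zero_iff.mpr hn
    set r : ℝ := ‖w n‖⁻¹ with hr_def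
    have e2 : (inner ℂ (A (r • w n)) (r • w n) : ℂ) =
        ((r ^ 2 : ℝ) : ℂ) * inner ℂ (A (w n)) (w n) := by
      rw [hsm, isl, isr]; push_cast; ring
    have e1 : (inner ℂ (A (A (r • w n))) (r • w n) : ℂ) =
        ((r ^ 2 * ‖A (w n)‖ ^ 2 : ℝ) : ℂ) := by
      have hAA : A (A (r • w n)) = r • A (A (w n)) := by rw [hsm, hsm]
      have hsym : (inner ℂ (A (A (w n))) (w n) : ℂ) = inner ℂ (A (w n)) (A (w n)) :=
        hA.isSymmetric _ _
      have hself : (inner ℂ (A (w n)) (A (w n)) : ℂ) = ((‖A (w n)‖ ^ 2 : ℝ) : ℂ) := by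
        rw [inner_self_eq_norm_sq_to_K]; norm_cast
      rw [hAA, isl, isr, hsym, hself]
      push_cast; ring
    rw [variance, e1, e2]
    rw [Complex.ofReal_re, Complex.re_ofReal_mul]
    have hr2 : r ^ 2 = (‖w n‖ ^ 2)⁻¹ := by rw [hr_def, inv_pow]
    rw [hr2]
    field_simp
  -- conclusion
  refine ⟨hwne, ?_⟩
  have heq : ∀ᶠ n in atTop,
      ‖A (w n)‖ ^ 2 / ‖w n‖ ^ 2 - ((inner ℂ (A (w n)) (w n) : ℂ).re / ‖w n‖ ^ 2) ^ 2
        = variance A (‖w n‖⁻¹ • w n) := by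
    filter_upwards [hwne] with n hn
    exact (hvar n hn).symm
  have hsne : (α ^ 2 + β ^ 2 : ℝ) ≠ 0 := ne_of_gt hsumpos
  have hlim : Tendsto (fun n =>
      ‖A (w n)‖ ^ 2 / ‖w n‖ ^ 2 - ((inner ℂ (A (w n)) (w n) : ℂ).re / ‖w n‖ ^ 2) ^ 2) atTop
      (nhds ((α ^ 2 * lam ^ 2 + β ^ 2 * mu ^ 2) / (α ^ 2 + β ^ 2)
        - ((α ^ 2 * lam + β ^ 2 * mu) / (α ^ 2 + β ^ 2)) ^ 2)) :=
    (hg.div hs hsne).sub ((ht.div hs hsne).pow 2)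
  have hval : (α ^ 2 * lam ^ 2 + β ^ 2 * mu ^ 2) / (α ^ 2 + β ^ 2)
      - ((α ^ 2 * lam + β ^ 2 * mu) / (α ^ 2 + β ^ 2)) ^ 2
      = α ^ 2 * β ^ 2 * (lam - mu) ^ 2 / (α ^ 2 + β ^ 2) ^ 2 := by
    field_simp
    ring
  rw [hval] at hlim
  exact hlim.congr' heq
end

section
/- Let H be a complex Hilbert space and let A, B be bounded self-adjoint operators on H with A ⪯ B. Then there exists a function f : ℝ → ℝ with Lipschitz constant 1 such that: for every λ in the spectrum of B and every sequence (x_n) of unit vectors with ‖B x_n − λ x_n‖ → 0, one has ‖A x_n − f(λ) x_n‖ → 0. (Lemma 3.3: approximate eigenvectors of B are approximate eigenvectors of A, with a 1-Lipschitz eigenvalue function.) -/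
open Filter

lemma quad_helper (α β r δ : ℝ) (h1 : -δ ≤ r) (h2 : r ≤ δ) :
    (1 - δ) * (α^2 + β^2) ≤ α^2 + β^2 + 2 * (α * β * r) := by
  nlinarith [mul_nonneg (sq_nonneg (α + β)) (by linarith : (0:ℝ) ≤ δ + r),
    mul_nonneg (sq_nonneg (α - β)) (by linarith : (0:ℝ) ≤ δ - r)]

lemma real_est_helper (a b c D q δ ε : ℝ) (hε : 0 ≤ ε) (hD0 : 0 ≤ D) (hδ0 : 0 ≤ δ)
    (hδh : δ ≤ 1/2) (hDδ : D * δ ≤ ε + ε) (hq0 : 0 ≤ q) (hq2 : q ≤ 2)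
    (hq2' : q^2 ≤ 2 + 2*δ)
    (h5 : (1 - δ) * ((a - c)^2 + (b - c)^2) ≤ (4*ε + (D/2)*q)^2) :
    |a - b| ≤ D + 20*ε := by
  have h1δ : (0:ℝ) ≤ 1 - δ := by linarith
  have hab2 : (a - b)^2 ≤ 2 * ((a - c)^2 + (b - c)^2) := by nlinarith [sq_nonneg (a + b - 2*c)]
  have key1 : (1 - δ) * (a - b)^2 ≤ 2 * (4*ε + (D/2)*q)^2 := by
    nlinarith [mul_le_mul_of_nonneg_left hab2 h1δ, h5]
  have key2 : 2 * (4*ε + (D/2)*q)^2 ≤ 32*ε^2 + 18*ε*D + D^2 := by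
    nlinarith [mul_nonneg (mul_nonneg hε hD0) (by linarith : (0:ℝ) ≤ 2 - q),
      mul_le_mul_of_nonneg_left hq2' (by positivity : (0:ℝ) ≤ D^2/2),
      mul_le_mul_of_nonneg_left hDδ hD0]
  have key3 : 32*ε^2 + 18*ε*D + D^2 ≤ (1 - δ) * (D + 20*ε)^2 := by
    nlinarith [mul_le_mul_of_nonneg_left hDδ hD0,
      mul_le_mul_of_nonneg_left hDδ (by positivity : (0:ℝ) ≤ 40*ε),
      mul_le_mul_of_nonneg_right hδh (by positivity : (0:ℝ) ≤ 400*ε^2)]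
  have key4 : (a - b)^2 ≤ (D + 20*ε)^2 := by
    nlinarith [key1, key2, key3, sq_nonneg (a - b), sq_nonneg (D + 20*ε)]
  have := Real.sqrt_le_sqrt key4
  rwa [Real.sqrt_sq_eq_abs, Real.sqrt_sq (by positivity)] at this

section Aux
variable {H : Type*} [NormedAddCommGroup H] [InnerProductSpace ℂ H]

local notation "⟪" x ", " y "⟫" => @inner ℂ _ _ x y

/-- mean value -/
noncomputable def mval (A : H →L[ℂ] H) (x : H) : ℝ := (inner ℂ (A x) x : ℂ).re

lemma real_smul_eq (r : ℝ) (x : H) : r • x = (r : ℂ) • x := (algebraMap_smul ℂ r x).symm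

lemma expand_sq (T : H →L[ℂ] H) (x : H) (hx : ‖x‖ = 1) (t : ℝ) :
    ‖T x - t • x‖ ^ 2 = ‖T x‖ ^ 2 - 2 * t * mval T x + t ^ 2 := by
  rw [real_smul_eq, @norm_sub_sq ℂ, inner_smul_right, norm_smul]
  simp [mval, hx, RCLike.re_to_complex, mul_pow, Complex.norm_real,
    Real.norm_eq_abs, sq_abs]
  ring

lemma variance_eq_sub (T : H →L[ℂ] H) (hT : (T : H →ₗ[ℂ] H).IsSymmetric) (x : H)
    (hx : ‖x‖ = 1) : variance T x = ‖T x‖ ^ 2 - (mval T x) ^ 2 := by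
  have h : (⟪T (T x), x⟫ : ℂ) = ⟪T x, T x⟫ := hT (T x) x
  rw [variance, mval]
  rw [show (inner ℂ (T (T x)) x : ℂ) = ⟪T (T x), x⟫ from rfl, h]
  rw [show (⟪T x, T x⟫ : ℂ) = (‖T x‖ : ℂ) ^ 2 from by
    rw [inner_self_eq_norm_sq_to_K]; norm_cast]
  norm_cast

lemma variance_le_norm (T : H →L[ℂ] H) (hT : (T : H →ₗ[ℂ] H).IsSymmetric) (x : H)
    (hx : ‖x‖ = 1) (t : ℝ) : variance T x ≤ ‖T x - t • x‖ ^ 2 := by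
  rw [variance_eq_sub T hT x hx, expand_sq T x hx t]; nlinarith [sq_nonneg (t - mval T x)]

lemma variance_eq_norm (T : H →L[ℂ] H) (hT : (T : H →ₗ[ℂ] H).IsSymmetric) (x : H)
    (hx : ‖x‖ = 1) : variance T x = ‖T x - mval T x • x‖ ^ 2 := by
  rw [variance_eq_sub T hT x hx, expand_sq T x hx (mval T x)]; ring

lemma L0 {T : H →L[ℂ] H} (hT : (T : H →ₗ[ℂ] H).IsSymmetric)
    {x z : H} (hx : ‖x‖ = 1) (hz : ‖z‖ = 1) (s t : ℝ) :
    |s - t| * ‖(⟪z, x⟫ : ℂ)‖ ≤ ‖T z - s • z‖ + ‖T x - t • x‖ := by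
  have hsym : (inner ℂ (T z) x : ℂ) = inner ℂ z (T x) := hT z x
  have key : ((s : ℂ) - t) * ⟪z, x⟫ = ⟪s • z - T z, x⟫ + ⟪z, T x - t • x⟫ := by
    rw [inner_sub_left, inner_sub_right, real_smul_eq, real_smul_eq,
      inner_smul_left, inner_smul_right, hsym, Complex.conj_ofReal]
    ring
  calc |s - t| * ‖(⟪z, x⟫ : ℂ)‖ = ‖((s : ℂ) - t) * ⟪z, x⟫‖ := by
        rw [norm_mul]
        congr 1
        rw [← Complex.ofReal_sub, Complex.norm_real, Real.norm_eq_abs]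
      _ = ‖(⟪s • z - T z, x⟫ : ℂ) + ⟪z, T x - t • x⟫‖ := by rw [key]
      _ ≤ ‖(⟪s • z - T z, x⟫ : ℂ)‖ + ‖(⟪z, T x - t • x⟫ : ℂ)‖ := norm_add_le _ _
      _ ≤ ‖s • z - T z‖ * ‖x‖ + ‖z‖ * ‖T x - t • x‖ := by
        gcongr <;> exact norm_inner_le_norm _ _
      _ = ‖T z - s • z‖ + ‖T x - t • x‖ := by rw [norm_sub_rev, hx, hz]; ring

lemma approx {A B : H →L[ℂ] H} (hA : (A : H →ₗ[ℂ] H).IsSymmetric)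
    (hB : (B : H →ₗ[ℂ] H).IsSymmetric) (hAB : VarLE A B) {x : H} (hx : ‖x‖ = 1) (t : ℝ) :
    ‖A x - mval A x • x‖ ≤ ‖B x - t • x‖ := by
  have h1 : ‖A x - mval A x • x‖ ^ 2 ≤ ‖B x - t • x‖ ^ 2 := by
    rw [← variance_eq_norm A hA x hx]
    exact le_trans (hAB x hx) (variance_le_norm B hB x hx t)
  have := Real.sqrt_le_sqrt h1
  rwa [Real.sqrt_sq (norm_nonneg _), Real.sqrt_sq (norm_nonneg _)] at this

lemma main_est {A B : H →L[ℂ] H} (hA : (A : H →ₗ[ℂ] H).IsSymmetric)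
    (hB : (B : H →ₗ[ℂ] H).IsSymmetric) (hAB : VarLE A B)
    {x y : H} (hx : ‖x‖ = 1) (hy : ‖y‖ = 1) {lam mu ε : ℝ}
    (hxB : ‖B x - lam • x‖ ≤ ε) (hyB : ‖B y - mu • y‖ ≤ ε) :
    |mval A x - mval A y| ≤ |lam - mu| + 20 * ε := by
  have hε : 0 ≤ ε := le_trans (norm_nonneg _) hxB
  set a := mval A x with ha
  set b := mval A y with hb
  set D := |lam - mu| with hDdef
  have hD0 : 0 ≤ D := abs_nonneg _
  set δ := ‖(⟪x, y⟫ : ℂ)‖ with hδdef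
  have hδ0 : 0 ≤ δ := norm_nonneg _
  have hAx : ‖A x - a • x‖ ≤ ε := le_trans (approx hA hB hAB hx lam) hxB
  have hAy : ‖A y - b • y‖ ≤ ε := le_trans (approx hA hB hAB hy mu) hyB
  by_cases hcase : (1:ℝ)/2 < δ
  · -- nearly parallel case
    have h1 : |a - b| * δ ≤ ε + ε :=
      le_trans (L0 hA hy hx a b) (add_le_add hAx hAy)
    have : |a - b| ≤ 4 * ε := by nlinarith [abs_nonneg (a - b)]
    linarith
  · push_neg at hcase
    have hDδ : D * δ ≤ ε + ε := le_trans (L0 hB hy hx lam mu) (add_le_add hxB hyB)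
    set r := (⟪x, y⟫ : ℂ).re with hrdef
    have hr : |r| ≤ δ := by
      rw [hrdef, hδdef]; exact Complex.abs_re_le_norm _
    have hrabs := abs_le.1 hr
    set w := x + y with hwdef
    have hw2 : ‖w‖ ^ 2 = 2 + 2 * r := by
      rw [hwdef, @norm_add_sq ℂ, hx, hy]
      simp [hrdef, RCLike.re_to_complex]
      ring
    have hn1 : 1 ≤ ‖w‖ := by nlinarith [norm_nonneg w]
    have hnne : ‖w‖ ≠ 0 := by positivity
    have hnpos : (0:ℝ) < ‖w‖ := by positivity
    set z := ‖w‖⁻¹ • w with hzdef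
    have hz : ‖z‖ = 1 := by
      rw [hzdef, norm_smul, Real.norm_eq_abs, abs_of_nonneg (by positivity),
        inv_mul_cancel₀ hnne]
    set q := ‖x - y‖ with hqdef
    have hqnn : 0 ≤ q := norm_nonneg _
    have hq2 : q ≤ 2 := by
      rw [hqdef]
      calc ‖x - y‖ ≤ ‖x‖ + ‖y‖ := norm_sub_le _ _
        _ = 2 := by rw [hx, hy]; norm_num
    have hq2' : q ^ 2 ≤ 2 + 2 * δ := by
      rw [hqdef, @norm_sub_sq ℂ, hx, hy]
      simp only [RCLike.re_to_complex]
      have : (⟪x, y⟫ : ℂ).re = r := rfl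
      nlinarith [hrabs.1]
    -- identity for B z - t z
    have hBw : B w = B x + B y := by rw [hwdef, map_add]
    have hAw : A w = A x + A y := by rw [hwdef, map_add]
    have hBzval : B z = ‖w‖⁻¹ • (B x + B y) := by
      rw [hzdef, ContinuousLinearMap.map_smul_of_tower, hBw]
    have hAzval : A z = ‖w‖⁻¹ • (A x + A y) := by
      rw [hzdef, ContinuousLinearMap.map_smul_of_tower, hAw]
    have idB : B z - ((lam + mu)/2) • z
        = ‖w‖⁻¹ • ((B x - lam • x) + (B y - mu • y) + ((lam - mu)/2) • (x - y)) := by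
      rw [hBzval, hzdef]
      module
    have hBz : ‖B z - ((lam + mu)/2) • z‖ ≤ ‖w‖⁻¹ * (2 * ε + (D/2) * q) := by
      rw [idB, norm_smul, Real.norm_eq_abs, abs_of_nonneg (by positivity)]
      gcongr
      calc ‖(B x - lam • x) + (B y - mu • y) + ((lam - mu)/2) • (x - y)‖
          ≤ ‖(B x - lam • x) + (B y - mu • y)‖ + ‖((lam - mu)/2) • (x - y)‖ :=
            norm_add_le _ _
        _ ≤ (‖B x - lam • x‖ + ‖B y - mu • y‖) + |((lam - mu)/2)| * ‖x - y‖ := by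
            gcongr
            · exact norm_add_le _ _
            · rw [norm_smul, Real.norm_eq_abs]
        _ ≤ 2 * ε + (D/2) * q := by
            rw [abs_div, abs_two, hqdef, hDdef]
            linarith
    set c := mval A z with hcdef
    have hAz : ‖A z - c • z‖ ≤ ‖B z - ((lam + mu)/2) • z‖ := approx hA hB hAB hz _
    have e2 : ‖w‖ • z = w := by rw [hzdef]; exact smul_inv_smul₀ hnne w
    have e1 : ‖w‖ • A z = A x + A y := by
      rw [hAzval, smul_inv_smul₀ hnne]
    have id3 : (a - c) • x + (b - c) • y
        = ‖w‖ • (A z - c • z) - (A x - a • x) - (A y - b • y) := by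
      rw [smul_sub, e1, smul_comm, e2, hwdef]
      module
    have h3 : ‖(a - c) • x + (b - c) • y‖ ≤ 4 * ε + (D/2) * q := by
      rw [id3]
      have hstep : ‖w‖ * ‖A z - c • z‖ ≤ 2 * ε + (D/2) * q := by
        calc ‖w‖ * ‖A z - c • z‖ ≤ ‖w‖ * (‖w‖⁻¹ * (2 * ε + (D/2) * q)) := by
              gcongr
              exact le_trans hAz hBz
          _ = 2 * ε + (D/2) * q := by
              rw [← mul_assoc, mul_inv_cancel₀ hnne, one_mul]
      calc ‖‖w‖ • (A z - c • z) - (A x - a • x) - (A y - b • y)‖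
          ≤ ‖‖w‖ • (A z - c • z) - (A x - a • x)‖ + ‖A y - b • y‖ := norm_sub_le _ _
        _ ≤ (‖‖w‖ • (A z - c • z)‖ + ‖A x - a • x‖) + ‖A y - b • y‖ := by
            gcongr; exact norm_sub_le _ _
        _ ≤ (‖w‖ * ‖A z - c • z‖ + ε) + ε := by
            gcongr
            rw [norm_smul, Real.norm_eq_abs, abs_of_nonneg (le_of_lt hnpos)]
        _ ≤ 4 * ε + (D/2) * q := by linarith
    have hin : ((⟪(a - c) • x, (b - c) • y⟫ : ℂ)).re = (a - c) * (b - c) * r := by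
      rw [real_smul_eq, real_smul_eq, inner_smul_left, inner_smul_right,
        Complex.conj_ofReal, ← mul_assoc, ← Complex.ofReal_mul, Complex.re_ofReal_mul,
        hrdef]
    have h4 : (1 - δ) * ((a - c)^2 + (b - c)^2) ≤ ‖(a - c) • x + (b - c) • y‖ ^ 2 := by
      rw [@norm_add_sq ℂ]
      simp only [RCLike.re_to_complex]
      rw [hin, norm_smul, norm_smul, Real.norm_eq_abs, Real.norm_eq_abs, hx, hy]
      rw [mul_one, mul_one, sq_abs, sq_abs]
      linarith [quad_helper (a - c) (b - c) r δ hrabs.1 hrabs.2]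
    have h5 : (1 - δ) * ((a - c)^2 + (b - c)^2) ≤ (4 * ε + (D/2) * q)^2 :=
      le_trans h4 (pow_le_pow_left₀ (norm_nonneg _) h3 2)
    exact real_est_helper a b c D q δ ε hε hD0 hδ0 hcase hDδ hqnn hq2 hq2' h5

end Aux

lemma one_div_cast_le {n N : ℕ} (h : N ≤ n) : (1:ℝ)/(n+1) ≤ 1/(N+1) := by
  apply one_div_le_one_div_of_le
  · positivity
  · have : (N:ℝ) ≤ n := Nat.cast_le.2 h
    linarith

lemma tendsto_aux (c : ℝ) : Tendsto (fun n : ℕ => c * (1/(n+1))) atTop (nhds 0) := by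
  simpa using tendsto_one_div_add_atTop_nhds_zero_nat.const_mul c

/-- Lemma 3.3: if `A ⪯ B`, there is a `1`-Lipschitz function `f` such that every
approximate eigenvector of `B` with approximate eigenvalue `λ ∈ σ(B)` is an approximate
eigenvector of `A` with approximate eigenvalue `f(λ)`. -/
theorem exists_lipschitz_approx_eigenvalue_map {H : Type*} [NormedAddCommGroup H]
    [InnerProductSpace ℂ H] [CompleteSpace H] (A B : H →L[ℂ] H)
    (hA : IsSelfAdjoint A) (hB : IsSelfAdjoint B) (hAB : VarLE A B) :
    ∃ f : ℝ → ℝ, LipschitzWith 1 f ∧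
      ∀ lam : ℝ, (lam : ℂ) ∈ spectrum ℂ B →
        ∀ x : ℕ → H, (∀ n, ‖x n‖ = 1) →
          Tendsto (fun n => ‖B (x n) - lam • x n‖) atTop (nhds 0) →
          Tendsto (fun n => ‖A (x n) - f lam • x n‖) atTop (nhds 0) := by
  rw [ContinuousLinearMap.isSelfAdjoint_iff_isSymmetric] at hA hB
  set T : Set ℝ := {l : ℝ | ∀ n : ℕ, ∃ v : H, ‖v‖ = 1 ∧ ‖B v - l • v‖ ≤ 1/(n+1)} with hTdef
  have main : ∀ l : ℝ, ∃ r : ℝ, l ∈ T → ∀ x : H, ∀ ε : ℝ, ‖x‖ = 1 → ‖B x - l • x‖ ≤ ε →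
      |mval A x - r| ≤ 20 * ε := by
    intro l
    by_cases hl : l ∈ T
    · choose u hu1 hu2 using hl
      have hcauchy : CauchySeq (fun n => mval A (u n)) := by
        apply cauchySeq_of_le_tendsto_0 (fun N : ℕ => 20 * (1/(N+1))) _ (tendsto_aux 20)
        intro n m N hn hm
        rw [Real.dist_eq]
        have := main_est hA hB hAB (hu1 n) (hu1 m)
          (le_trans (hu2 n) (one_div_cast_le hn)) (le_trans (hu2 m) (one_div_cast_le hm))
        simpa using this
      obtain ⟨r, hr⟩ := cauchySeq_tendsto_of_complete hcauchy
      refine ⟨r, fun _ x ε hx1 hxε => ?_⟩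
      have hε : 0 ≤ ε := le_trans (norm_nonneg _) hxε
      have hbnd : ∀ n : ℕ, |mval A x - mval A (u n)| ≤ |l - l| + 20 * max ε (1/(n+1)) :=
        fun n => main_est hA hB hAB hx1 (hu1 n)
          (le_trans hxε (le_max_left _ _)) (le_trans (hu2 n) (le_max_right _ _))
      have t1 : Tendsto (fun n => |mval A x - mval A (u n)|) atTop (nhds (|mval A x - r|)) :=
        (tendsto_const_nhds.sub hr).abs
      have t2 : Tendsto (fun n : ℕ => |l - l| + 20 * max ε (1/(n+1))) atTop
          (nhds (|l - l| + 20 * max ε 0)) := by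
        exact tendsto_const_nhds.add
          ((tendsto_const_nhds.max tendsto_one_div_add_atTop_nhds_zero_nat).const_mul 20)
      have := le_of_tendsto_of_tendsto' t1 t2 hbnd
      simpa [max_eq_left hε] using this
    · exact ⟨0, fun h => absurd h hl⟩
  choose g hg using main
  have hgg : LipschitzOnWith 1 g T := by
    rw [lipschitzOnWith_iff_dist_le_mul]
    intro l hl l' hl'
    rw [Real.dist_eq, Real.dist_eq, NNReal.coe_one, one_mul]
    have hlT := hl
    have hlT' := hl'
    choose u hu1 hu2 using hlT
    choose u' hu1' hu2' using hlT'
    have hbnd : ∀ n : ℕ, |g l - g l'| ≤ |l - l'| + 60 * (1/(n+1)) := by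
      intro n
      have e1 := hg l hl (u n) (1/(n+1)) (hu1 n) (hu2 n)
      have e2 := hg l' hl' (u' n) (1/(n+1)) (hu1' n) (hu2' n)
      have e3 := main_est hA hB hAB (hu1 n) (hu1' n) (hu2 n) (hu2' n)
      have tri : |g l - g l'| ≤ |g l - mval A (u n)| + |mval A (u n) - mval A (u' n)|
          + |mval A (u' n) - g l'| := by
        calc |g l - g l'| ≤ |g l - mval A (u' n)| + |mval A (u' n) - g l'| := abs_sub_le _ _ _
          _ ≤ (|g l - mval A (u n)| + |mval A (u n) - mval A (u' n)|) + |mval A (u' n) - g l'| := by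
              gcongr
              exact abs_sub_le _ _ _
      rw [abs_sub_comm] at e1
      linarith
    have t2 : Tendsto (fun n : ℕ => |l - l'| + 60 * (1/(n+1))) atTop (nhds (|l - l'|)) := by
      simpa using tendsto_const_nhds.add (tendsto_aux 60)
    exact ge_of_tendsto t2 (Eventually.of_forall hbnd)
  obtain ⟨f, hf1, hf2⟩ := hgg.extend_real
  refine ⟨f, hf1, ?_⟩
  intro lam _ x hx1 hx2
  have hlamT : lam ∈ T := by
    intro n
    have hpos : (0:ℝ) < 1/(n+1) := by positivity
    obtain ⟨N, hN⟩ := (hx2.eventually_lt_const hpos).exists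
    exact ⟨x N, hx1 N, le_of_lt hN⟩
  have hfg : f lam = g lam := (hf2 hlamT).symm
  rw [hfg]
  apply squeeze_zero (fun n => norm_nonneg _) (g := fun n => 21 * ‖B (x n) - lam • x n‖)
    (fun n => ?_) (by simpa using hx2.const_mul (21:ℝ))
  have h1 : ‖A (x n) - mval A (x n) • x n‖ ≤ ‖B (x n) - lam • x n‖ :=
    approx hA hB hAB (hx1 n) lam
  have h2 : |mval A (x n) - g lam| ≤ 20 * ‖B (x n) - lam • x n‖ :=
    hg lam hlamT (x n) _ (hx1 n) le_rfl
  calc ‖A (x n) - g lam • x n‖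
      = ‖(A (x n) - mval A (x n) • x n) + (mval A (x n) - g lam) • x n‖ := by
        congr 1
        module
    _ ≤ ‖A (x n) - mval A (x n) • x n‖ + ‖(mval A (x n) - g lam) • x n‖ := norm_add_le _ _
    _ = ‖A (x n) - mval A (x n) • x n‖ + |mval A (x n) - g lam| := by
        rw [norm_smul, Real.norm_eq_abs, hx1 n, mul_one]
    _ ≤ 21 * ‖B (x n) - lam • x n‖ := by linarith
end

section
/- Let H be a complex Hilbert space and let A, B be bounded self-adjoint operators on H with A ⪯ B. If x ∈ H is a unit vector with B x = λ x for some λ ∈ ℝ, then x is also an eigenvector of A; in fact A x = 𝔼_x(A)·x. (Key step in the finite-dimensional proof of Theorem 2.1: every eigenvector of B is an eigenvector of A.) -/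
/-- If `A ⪯ B` and `x` is a unit eigenvector of `B`, then `x` is an eigenvector of `A`;
in fact `Ax = 𝔼_x(A) x`. -/
theorem eigenvector_of_varLE {H : Type*} [NormedAddCommGroup H] [InnerProductSpace ℂ H]
    [CompleteSpace H] (A B : H →L[ℂ] H) (hA : IsSelfAdjoint A) (hB : IsSelfAdjoint B)
    (hAB : VarLE A B) (x : H) (hx : ‖x‖ = 1) (lam : ℝ) (heig : B x = lam • x) :
    A x = expVal A x • x := by
  have hxx : (inner ℂ x x : ℂ) = 1 := by
    rw [inner_self_eq_norm_sq_to_K, hx]; norm_num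
  -- variance of B at x is 0
  have heig' : B x = (lam : ℂ) • x := by rw [heig, Complex.coe_smul]
  have hvB : variance B x = 0 := by
    unfold variance
    rw [heig', map_smul, heig', smul_smul, inner_smul_left, inner_smul_left, hxx]
    simp
    ring
  have hvA : variance A x ≤ 0 := hvB ▸ hAB x hx
  -- inner (A (A x)) x = ‖A x‖ ^ 2
  have hAAx : (inner ℂ (A (A x)) x : ℂ) = (inner ℂ (A x) (A x) : ℂ) := by
    conv_lhs => rw [show A (A x) = ContinuousLinearMap.adjoint A (A x) by rw [hA.adjoint_eq]]
    exact ContinuousLinearMap.adjoint_inner_left A x (A x)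
  have hnorm : (inner ℂ (A (A x)) x : ℂ).re = ‖A x‖ ^ 2 := by
    rw [hAAx]
    simpa using inner_self_eq_norm_sq (𝕜 := ℂ) (A x)
  set E : ℝ := expVal A x with hE
  have key : ‖A x - (E : ℂ) • x‖ ^ 2 ≤ 0 := by
    have expand := norm_sub_sq (𝕜 := ℂ) (A x) ((E : ℂ) • x)
    simp only [RCLike.re_to_complex] at expand
    have h1 : (inner ℂ (A x) ((E : ℂ) • x) : ℂ).re = E ^ 2 := by
      rw [inner_smul_right]
      simp [hE, expVal]
      ring
    have h2 : ‖(E : ℂ) • x‖ ^ 2 = E ^ 2 := by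
      rw [norm_smul, hx]
      simp [sq_abs]
    rw [expand, h1, h2]
    have : ‖A x‖ ^ 2 - E ^ 2 ≤ 0 := by
      have := hvA
      unfold variance at this
      rw [hnorm] at this
      simpa [hE, expVal] using this
    linarith
  have : A x - (E : ℂ) • x = 0 := by
    have hn : ‖A x - (E : ℂ) • x‖ = 0 := by
      nlinarith [norm_nonneg (A x - (E : ℂ) • x), sq_nonneg ‖A x - (E : ℂ) • x‖]
    exact norm_eq_zero.mp hn
  have := sub_eq_zero.mp this
  simpa [hE] using this
end

section
/- Let H be a complex Hilbert space, let t > 0, and let P be an orthogonal projection on H with P ≠ 0 and P ≠ I. Then for a bounded self-adjoint operator B on H, B ⪯ t·P holds if and only if there exist s ∈ [0, t] and c ∈ ℝ such that B = s·P + c·I or B = −s·P + c·I. (The down-set identity (tP)^⪰ = ∪_{0 ≤ s ≤ t} ⟨sP⟩ from Step 1 of the proof of Theorem 2.3.) -/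
section helpers

set_option linter.unusedSectionVars false

variable {H : Type*} [NormedAddCommGroup H] [InnerProductSpace ℂ H] [CompleteSpace H]

local notation "⟪" x ", " y "⟫" => @inner ℂ _ _ x y

private lemma sa_move {B : H →L[ℂ] H} (hB : IsSelfAdjoint B) (x y : H) :
    ⟪B x, y⟫ = ⟪x, B y⟫ := by
  conv_lhs => rw [← ContinuousLinearMap.isSelfAdjoint_iff'.mp hB]
  exact ContinuousLinearMap.adjoint_inner_left B y x

private lemma variance_smul (s : ℝ) (A : H →L[ℂ] H) (x : H) :
    variance (s • A) x = s ^ 2 * variance A x := by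
  have h1 : ∀ y : H, (s • A) y = (s : ℂ) • A y := fun y => by
    rw [ContinuousLinearMap.smul_apply]; exact RCLike.real_smul_eq_coe_smul s (A y)
  simp only [variance, h1, map_smul, inner_smul_left, smul_smul]
  simp [Complex.ext_iff]
  ring

private lemma variance_add_const (c : ℝ) (A : H →L[ℂ] H) (x : H) (hx : ‖x‖ = 1) :
    variance (A + (c : ℂ) • (1 : H →L[ℂ] H)) x = variance A x := by
  have hxx : ⟪x, x⟫ = 1 := by
    rw [inner_self_eq_norm_sq_to_K, hx]; norm_num
  simp only [variance, ContinuousLinearMap.add_apply, ContinuousLinearMap.smul_apply,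
    ContinuousLinearMap.one_apply, map_add, map_smul, inner_add_left, inner_smul_left,
    smul_add, smul_smul]
  rw [hxx]
  simp [Complex.ext_iff]
  ring

private lemma variance_neg (A : H →L[ℂ] H) (x : H) : variance (-A) x = variance A x := by
  simp [variance]

private lemma variance_eq_normsq {B : H →L[ℂ] H} (hB : IsSelfAdjoint B) {x : H} (hx : ‖x‖ = 1) :
    variance B x = ‖B x - (((⟪B x, x⟫).re : ℝ) : ℂ) • x‖ ^ 2 := by
  set μ : ℝ := (⟪B x, x⟫).re with hμ
  have hreal : ⟪B x, x⟫ = (μ : ℂ) := by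
    have h1 : ⟪B x, x⟫ = ⟪x, B x⟫ := sa_move hB x x
    have h2 : (starRingEnd ℂ) ⟪B x, x⟫ = ⟪B x, x⟫ := by
      rw [inner_conj_symm]; exact h1.symm
    exact (Complex.conj_eq_iff_re.mp h2).symm
  have hxx : ⟪x, x⟫ = 1 := by
    rw [inner_self_eq_norm_sq_to_K, hx]; norm_num
  have hBB : ⟪B (B x), x⟫ = ⟪B x, B x⟫ := sa_move hB (B x) x
  rw [@norm_sub_sq ℂ]
  rw [inner_smul_right, hreal, norm_smul]
  have h3 : ‖B x‖ ^ 2 = (⟪B (B x), x⟫).re := by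
    rw [hBB, ← inner_self_eq_norm_sq (𝕜 := ℂ), RCLike.re_to_complex]
  have h4 : ‖(μ : ℂ)‖ = |μ| := Complex.norm_real μ
  simp only [variance, h3, h4, hx, RCLike.re_to_complex, Complex.mul_re,
    Complex.ofReal_re, Complex.ofReal_im, sq_abs]
  rw [hμ] at *
  rw [mul_one, sq_abs]
  ring

private lemma eigen_of_var_nonpos {B : H →L[ℂ] H} (hB : IsSelfAdjoint B) {x : H} (hx : ‖x‖ = 1)
    (h : variance B x ≤ 0) : B x = (((⟪B x, x⟫).re : ℝ) : ℂ) • x := by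
  have h2 := variance_eq_normsq hB hx
  have h3 : ‖B x - (((⟪B x, x⟫).re : ℝ) : ℂ) • x‖ ^ 2 ≤ 0 := h2 ▸ h
  have h4 : ‖B x - (((⟪B x, x⟫).re : ℝ) : ℂ) • x‖ = 0 := by
    nlinarith [norm_nonneg (B x - (((⟪B x, x⟫).re : ℝ) : ℂ) • x)]
  rw [norm_eq_zero] at h4
  exact sub_eq_zero.mp h4

private lemma exists_const_eigen (B : H →L[ℂ] H) (Q : H → Prop)
    (hQadd : ∀ {x y : H}, Q x → Q y → Q (x + y))
    (heig : ∀ x, Q x → ∃ μ : ℝ, B x = μ • x)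
    {u₀ : H} (hu₀ : Q u₀) (hu₀0 : u₀ ≠ 0) :
    ∃ β : ℝ, ∀ x, Q x → B x = β • x := by
  obtain ⟨β, hβ⟩ := heig u₀ hu₀
  refine ⟨β, fun x hx => ?_⟩
  by_cases hx0 : x = 0
  · simp [hx0]
  obtain ⟨μ, hμ⟩ := heig x hx
  obtain ⟨ν, hν⟩ := heig (u₀ + x) (hQadd hu₀ hx)
  rw [map_add, hβ, hμ] at hν
  have key : (β - ν) • u₀ = (ν - μ) • x := by
    rw [sub_smul, sub_smul, smul_add] at *
    linear_combination (norm := module) hν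
  by_cases hβν : β = ν
  · rw [hβν, sub_self, zero_smul] at key
    have h5 : ν - μ = 0 := by
      rcases smul_eq_zero.mp key.symm with h | h
      · exact h
      · exact absurd h hx0
    have : μ = β := by rw [hβν]; linarith [sub_eq_zero.mp h5]
    rw [hμ, this]
  · have hd : β - ν ≠ 0 := sub_ne_zero.mpr hβν
    have hu : u₀ = ((β - ν)⁻¹ * (ν - μ)) • x := by
      rw [mul_smul, ← key, smul_smul, inv_mul_cancel₀ hd, one_smul]
    set a := (β - ν)⁻¹ * (ν - μ) with ha
    have ha0 : a ≠ 0 := fun h => hu₀0 (by rw [hu, h, zero_smul])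
    have h1 : (a * μ) • x = (β * a) • x := by
      have h2 := hβ
      rw [hu, ContinuousLinearMap.map_smul_of_tower, hμ, smul_smul, smul_smul] at h2
      exact h2
    have h3 : a * μ = β * a := smul_left_injective ℝ hx0 h1
    have hμβ : μ = β := by
      rcases mul_eq_mul_right_iff.mp (by linarith [h3] : μ * a = β * a) with h | h
      · exact h
      · exact absurd h ha0
    rw [hμ, hμβ]

end helpers

/-- Step 1 of the proof of Theorem 2.3: for a non-trivial projection `P` and `t > 0`,
`B ⪯ tP` iff `B = sP + cI` or `B = −sP + cI` for some `s ∈ [0, t]` and `c ∈ ℝ`. -/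
theorem varLE_scaled_projection_iff {H : Type*} [NormedAddCommGroup H]
    [InnerProductSpace ℂ H] [CompleteSpace H] (t : ℝ) (ht : 0 < t)
    (P : H →L[ℂ] H) (hP : IsSelfAdjoint P) (hidem : P * P = P)
    (hP0 : P ≠ 0) (hPI : P ≠ 1) (B : H →L[ℂ] H) (hB : IsSelfAdjoint B) :
    VarLE B (t • P) ↔
      ∃ s c : ℝ, 0 ≤ s ∧ s ≤ t ∧
        (B = s • P + (c : ℂ) • (1 : H →L[ℂ] H) ∨
          B = -(s • P) + (c : ℂ) • (1 : H →L[ℂ] H)) := by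
  have hPP : ∀ y : H, P (P y) = P y := fun y => by
    rw [← ContinuousLinearMap.mul_apply, hidem]
  have hvarP : ∀ x : H, variance P x =
      (inner ℂ (P x) x : ℂ).re - ((inner ℂ (P x) x : ℂ).re) ^ 2 := by
    intro x; simp only [variance, hPP]
  constructor
  · intro hV
    -- every vector in the range or kernel of P is an eigenvector of B
    have heig : ∀ x : H, P x = x ∨ P x = 0 → ∃ μ : ℝ, B x = μ • x := by
      intro x hx
      by_cases hx0 : x = 0
      · exact ⟨0, by simp [hx0]⟩
      set u := ‖x‖⁻¹ • x with hu
      have hu1 : ‖u‖ = 1 := norm_smul_inv_norm hx0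
      have hP' : variance (t • P) u = 0 := by
        rw [variance_smul, hvarP]
        rcases hx with h | h
        · have hPu : P u = u := by rw [hu, ContinuousLinearMap.map_smul_of_tower, h]
          have h2 : (inner ℂ (P u) u : ℂ).re = 1 := by
            rw [hPu, inner_self_eq_norm_sq_to_K, hu1]
            norm_num
          rw [h2]; ring
        · have hPu : P u = 0 := by rw [hu, ContinuousLinearMap.map_smul_of_tower, h, smul_zero]
          rw [hPu]; simp
      have hle : variance B u ≤ 0 := by
        have h5 := hV u hu1; rw [hP'] at h5; exact h5
      have he := eigen_of_var_nonpos hB hu1 hle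
      set μ : ℝ := (inner ℂ (B u) u : ℂ).re with hμdef
      have he' : B u = μ • u := by
        rw [he]; exact (RCLike.real_smul_eq_coe_smul μ u).symm
      refine ⟨μ, ?_⟩
      have hxu : x = ‖x‖ • u := by
        rw [hu, smul_inv_smul₀ (norm_ne_zero_iff.mpr hx0)]
      calc B x = B (‖x‖ • u) := by rw [← hxu]
        _ = ‖x‖ • B u := ContinuousLinearMap.map_smul_of_tower B _ _
        _ = ‖x‖ • μ • u := by rw [he']
        _ = μ • ‖x‖ • u := smul_comm _ _ _
        _ = μ • x := by rw [← hxu]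
    -- unit vectors in range and kernel
    obtain ⟨u₀, hu₀P, hu₀1⟩ : ∃ u : H, P u = u ∧ ‖u‖ = 1 := by
      have h6 : ∃ y, P y ≠ 0 := by
        by_contra h; push_neg at h
        exact hP0 (ContinuousLinearMap.ext fun y => by simp [h y])
      obtain ⟨y, hy⟩ := h6
      refine ⟨‖P y‖⁻¹ • P y, ?_, norm_smul_inv_norm hy⟩
      rw [ContinuousLinearMap.map_smul_of_tower, hPP]
    obtain ⟨v₀, hv₀P, hv₀1⟩ : ∃ v : H, P v = 0 ∧ ‖v‖ = 1 := by
      have h6 : ∃ y, P y ≠ y := by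
        by_contra h; push_neg at h
        exact hPI (ContinuousLinearMap.ext fun y => by simp [h y])
      obtain ⟨y, hy⟩ := h6
      have hw : y - P y ≠ 0 := fun h => hy (sub_eq_zero.mp h).symm
      refine ⟨‖y - P y‖⁻¹ • (y - P y), ?_, norm_smul_inv_norm hw⟩
      rw [ContinuousLinearMap.map_smul_of_tower, map_sub, hPP, sub_self, smul_zero]
    have hu₀0 : u₀ ≠ 0 := by
      intro h; rw [h, norm_zero] at hu₀1; exact one_ne_zero hu₀1.symm
    have hv₀0 : v₀ ≠ 0 := by
      intro h; rw [h, norm_zero] at hv₀1; exact one_ne_zero hv₀1.symm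
    obtain ⟨β, hβ⟩ := exists_const_eigen B (fun x => P x = x)
      (fun hx hy => by simp only [map_add]; rw [hx, hy])
      (fun x hx => heig x (Or.inl hx)) hu₀P hu₀0
    obtain ⟨γ, hγ⟩ := exists_const_eigen B (fun x => P x = 0)
      (fun hx hy => by simp only [map_add]; rw [hx, hy, add_zero])
      (fun x hx => heig x (Or.inr hx)) hv₀P hv₀0
    have hBeq : B = ((β - γ) : ℝ) • P + ((γ : ℝ) : ℂ) • (1 : H →L[ℂ] H) := by
      ext x
      have h1 : B (P x) = β • P x := hβ _ (hPP x)
      have h2 : B (x - P x) = γ • (x - P x) := hγ _ (by rw [map_sub, hPP, sub_self])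
      have h3 : B x = B (P x) + B (x - P x) := by rw [← map_add]; congr 1; abel
      rw [h3, h1, h2]
      have hconv : ∀ (r : ℝ) (y : H), r • y = ((r : ℂ)) • y := fun r y =>
        RCLike.real_smul_eq_coe_smul r y
      simp only [ContinuousLinearMap.add_apply, ContinuousLinearMap.smul_apply,
        ContinuousLinearMap.one_apply, hconv]
      push_cast
      module
    -- the bound |β - γ| ≤ t
    have horth : (inner ℂ u₀ v₀ : ℂ) = 0 := by
      have h1 : (inner ℂ u₀ v₀ : ℂ) = inner ℂ (P u₀) v₀ := by rw [hu₀P]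
      rw [h1, sa_move hP, hv₀P, inner_zero_right]
    have hnorm2 : ‖u₀ + v₀‖ ^ 2 = 2 := by
      rw [@norm_add_sq ℂ, hu₀1, hv₀1, horth]
      norm_num
    have hnorm : ‖u₀ + v₀‖ = Real.sqrt 2 := by
      rw [← hnorm2, Real.sqrt_sq (norm_nonneg _)]
    set x₀ : H := (Real.sqrt 2)⁻¹ • (u₀ + v₀) with hx₀
    have hx₀1 : ‖x₀‖ = 1 := by
      rw [hx₀, norm_smul, hnorm, norm_inv, Real.norm_eq_abs,
        abs_of_nonneg (Real.sqrt_nonneg 2), inv_mul_cancel₀ (by positivity)]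
    have hPx₀ : P x₀ = (Real.sqrt 2)⁻¹ • u₀ := by
      rw [hx₀, ContinuousLinearMap.map_smul_of_tower, map_add, hu₀P, hv₀P, add_zero]
    have huu : (inner ℂ u₀ u₀ : ℂ) = 1 := by
      rw [inner_self_eq_norm_sq_to_K, hu₀1]; norm_num
    have hip : (inner ℂ (P x₀) x₀ : ℂ).re = 1 / 2 := by
      rw [hPx₀, hx₀, RCLike.real_smul_eq_coe_smul (K := ℂ) _ u₀,
        RCLike.real_smul_eq_coe_smul (K := ℂ) _ (u₀ + v₀),
        inner_smul_left, inner_smul_right, inner_add_right, huu, horth]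
      have hs2 : (Real.sqrt 2)⁻¹ * (Real.sqrt 2)⁻¹ = 1 / 2 := by
        rw [← mul_inv, Real.mul_self_sqrt (by norm_num : (0:ℝ) ≤ 2)]
        norm_num
      rw [add_zero, mul_one, RCLike.conj_ofReal, ← RCLike.ofReal_mul, hs2]
      norm_cast
    have hineq := hV x₀ hx₀1
    have hvtp : variance (t • P) x₀ = t ^ 2 * (1 / 4) := by
      rw [variance_smul, hvarP, hip]; ring
    have hvB : variance B x₀ = (β - γ) ^ 2 * (1 / 4) := by
      rw [hBeq, variance_add_const _ _ _ hx₀1, variance_smul, hvarP, hip]; ring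
    have ha2 : (β - γ) ^ 2 ≤ t ^ 2 := by
      rw [hvB, hvtp] at hineq; nlinarith [hineq]
    by_cases hc : γ ≤ β
    · exact ⟨β - γ, γ, sub_nonneg.mpr hc, by nlinarith, Or.inl hBeq⟩
    · refine ⟨γ - β, γ, by linarith, by nlinarith, Or.inr ?_⟩
      rw [hBeq]
      congr 1
      rw [show (β - γ : ℝ) = -(γ - β) by ring, neg_smul]
  · rintro ⟨s, c, hs0, hst, hcase⟩ x hx
    have hp : (inner ℂ (P x) x : ℂ).re = ‖P x‖ ^ 2 := by
      have h1 : (inner ℂ (P x) x : ℂ) = inner ℂ (P x) (P x) := by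
        conv_lhs => rw [← hPP x]
        exact sa_move hP (P x) x
      rw [h1, inner_self_eq_norm_sq_to_K]
      norm_cast
    have hp0 : 0 ≤ (inner ℂ (P x) x : ℂ).re := by rw [hp]; positivity
    have hPx1 : ‖P x‖ ≤ 1 := by
      have hre : (inner ℂ (P x) x : ℂ).re ≤ ‖(inner ℂ (P x) x : ℂ)‖ := by
        exact Complex.re_le_norm _
      have hcs : ‖(inner ℂ (P x) x : ℂ)‖ ≤ ‖P x‖ * ‖x‖ := norm_inner_le_norm _ _
      rw [hx, mul_one] at hcs
      nlinarith [hp, norm_nonneg (P x)]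
    have hp1 : (inner ℂ (P x) x : ℂ).re ≤ 1 := by
      rw [hp]; nlinarith [norm_nonneg (P x)]
    have hpp : 0 ≤ (inner ℂ (P x) x : ℂ).re - ((inner ℂ (P x) x : ℂ).re) ^ 2 := by nlinarith
    have hs2 : s ^ 2 ≤ t ^ 2 := by nlinarith
    have hvtp : variance (t • P) x =
        t ^ 2 * ((inner ℂ (P x) x : ℂ).re - ((inner ℂ (P x) x : ℂ).re) ^ 2) := by
      rw [variance_smul, hvarP]
    rcases hcase with h | h
    · have hvB : variance B x =
          s ^ 2 * ((inner ℂ (P x) x : ℂ).re - ((inner ℂ (P x) x : ℂ).re) ^ 2) := by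
        rw [h, variance_add_const _ _ _ hx, variance_smul, hvarP]
      rw [hvB, hvtp]
      exact mul_le_mul_of_nonneg_right hs2 hpp
    · have hvB : variance B x =
          s ^ 2 * ((inner ℂ (P x) x : ℂ).re - ((inner ℂ (P x) x : ℂ).re) ^ 2) := by
        rw [h, variance_add_const _ _ _ hx, variance_neg, variance_smul, hvarP]
      rw [hvB, hvtp]
      exact mul_le_mul_of_nonneg_right hs2 hpp
end
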